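/- arXiv:2411.18581 — 9 statements merged into one kernel-verified Lean document; each statement's English description precedes it below -/
import Mathlib

section
/- Let P_n be the path graph with vertex set {1,…,n} and edges (i,i+1) for 1 ≤ i ≤ n−1. For every configuration C on P_n there exists a sequence of at most n matchings solving the instance (P_n, C). -/
/-- A matching of the graph `G`, encoded as an involution of the vertex set that
moves vertices only along edges of `G`. -/
def IsMatchingPerm {V : Type*} (G : SimpleGraph V) (m : V → V) : Prop :=
  Function.Involutive m ∧ ∀ v, m v = v ∨ G.Adj v (m v)

/-- The configuration obtained from `C` by applying the sequence of matchings
`ms = [M₁, …, M_k]` (with `M₁` applied first):  `M_k ⋯ M₁ C = C ∘ m₁ ∘ ⋯ ∘ m_k`,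
where `(M C)(v) = C (m v)`. -/
def routeSeq {V : Type*} (C : V → V) (ms : List (V → V)) : V → V :=
  C ∘ ms.foldr (· ∘ ·) id

/-- The sequence of matchings `ms = (M₁, …, M_k)` solves the instance `(G, C)`,
i.e. `M_k ⋯ M₁ C = Id`. -/
def Solves {V : Type*} (G : SimpleGraph V) (C : V → V) (ms : List (V → V)) : Prop :=
  (∀ m ∈ ms, IsMatchingPerm G m) ∧ routeSeq C ms = id

/-- The path graph `P_n` on vertices `{0, …, n-1}` (representing `{1, …, n}`),
with edges `(i, i+1)`. -/
def pathGraph (n : ℕ) : SimpleGraph (Fin n) :=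
  SimpleGraph.fromRel fun i j => i.val + 1 = j.val

namespace PTS

/-- Where position `i` gets its new value from, in round `s` of odd-even
transposition sort applied to the array `a : ℕ → ℕ`.  In round `s`, the pair
`(i, i+1)` is compared iff `(i + s) % 2 = 0`. -/
def mv (s : ℕ) (a : ℕ → ℕ) : ℕ → ℕ := fun i =>
  if (i + s) % 2 = 0 then (if a (i + 1) < a i then i + 1 else i)
  else (if a i < a (i - 1) then i - 1 else i)

def step (s : ℕ) (a : ℕ → ℕ) : ℕ → ℕ := fun i => a (mv s a i)

lemma mv_cases (s : ℕ) (a : ℕ → ℕ) (i : ℕ) :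
    mv s a i = i ∨ (mv s a i = i + 1 ∧ a (i+1) < a i) ∨
      (0 < i ∧ mv s a i = i - 1 ∧ a i < a (i-1)) := by
  unfold mv
  split_ifs with h1 h2 h3
  · exact Or.inr (Or.inl ⟨rfl, h2⟩)
  · exact Or.inl rfl
  · rcases Nat.eq_zero_or_pos i with hi | hi
    · subst hi; simp at h3
    · exact Or.inr (Or.inr ⟨hi, rfl, h3⟩)
  · exact Or.inl rfl

lemma mv_involutive (s : ℕ) (a : ℕ → ℕ) : Function.Involutive (mv s a) := by
  intro i
  rcases mv_cases s a i with h | ⟨h, hlt⟩ | ⟨hi, h, hlt⟩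
  · rw [h, h]
  · rw [h]; unfold mv
    have hq : (i + s) % 2 = 0 := by
      by_contra hq
      unfold mv at h; rw [if_neg hq] at h
      split_ifs at h <;> omega
    have hp : ¬ ((i + 1 + s) % 2 = 0) := by omega
    rw [if_neg hp, if_pos (by simpa using hlt)]; simp
  · rw [h]; unfold mv
    have hq : ¬ ((i + s) % 2 = 0) := by
      by_contra hq
      unfold mv at h; rw [if_pos (by omega : (i+s) % 2 = 0)] at h
      split_ifs at h <;> omega
    have hp : (i - 1 + s) % 2 = 0 := by omega
    rw [if_pos hp]
    have h1 : i - 1 + 1 = i := by omega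
    rw [h1, if_pos hlt]

/-- Padding invariant: identity above `n`, values below `n` on `[0,n)`. -/
def Pad (n : ℕ) (a : ℕ → ℕ) : Prop :=
  (∀ i, n ≤ i → a i = i) ∧ (∀ i, i < n → a i < n)

lemma mv_lt (n s : ℕ) {a : ℕ → ℕ} (hp : Pad n a) {i : ℕ} (hi : i < n) :
    mv s a i < n := by
  rcases mv_cases s a i with h | ⟨h, hlt⟩ | ⟨hpos, h, hlt⟩
  · omega
  · rw [h]
    by_contra hc
    have h1 : a (i+1) = i + 1 := hp.1 _ (by omega)
    have h2 : a i < n := hp.2 _ hi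
    omega
  · omega

lemma mv_ge (n s : ℕ) {a : ℕ → ℕ} (hp : Pad n a) {i : ℕ} (hi : n ≤ i) :
    mv s a i = i := by
  rcases mv_cases s a i with h | ⟨h, hlt⟩ | ⟨hpos, h, hlt⟩
  · exact h
  · exfalso
    have h1 : a (i+1) = i + 1 := hp.1 _ (by omega)
    have h2 : a i = i := hp.1 _ hi
    omega
  · exfalso
    have h2 : a i = i := hp.1 _ hi
    rcases Nat.lt_or_ge (i-1) n with hc | hc
    · have := hp.2 _ hc; omega
    · have := hp.1 _ hc; omega

lemma step_pad (n s : ℕ) {a : ℕ → ℕ} (hp : Pad n a) : Pad n (step s a) := by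
  constructor
  · intro i hi; unfold step; rw [mv_ge n s hp hi]; exact hp.1 _ hi
  · intro i hi; unfold step; exact hp.2 _ (mv_lt n s hp hi)

/-- The trajectory: `traj a0 t` is the array after rounds `1, …, t`. -/
def traj (a0 : ℕ → ℕ) : ℕ → (ℕ → ℕ)
  | 0 => a0
  | t+1 => step (t+1) (traj a0 t)

lemma pad_traj (n : ℕ) {a0 : ℕ → ℕ} (hp : Pad n a0) (t : ℕ) : Pad n (traj a0 t) := by
  induction t with
  | zero => exact hp
  | succ t ih => exact step_pad n (t+1) ih



/-- Zero set for threshold `c`: positions holding a value `< c`. -/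
def Zset (n c : ℕ) (a : ℕ → ℕ) : Finset ℕ :=
  (Finset.range n).filter (fun i => a i < c)

lemma mem_Zset {n c : ℕ} {a : ℕ → ℕ} {i : ℕ} :
    i ∈ Zset n c a ↔ i < n ∧ a i < c := by
  simp [Zset]

/-- Where a zero at `p` moves during round `s` (zeros move left). -/
def phi (s c : ℕ) (a : ℕ → ℕ) : ℕ → ℕ := fun p =>
  if (p + s) % 2 = 1 ∧ 0 < p ∧ c ≤ a (p - 1) then p - 1 else p

lemma Z_step {n c s : ℕ} {a : ℕ → ℕ} (hp : Pad n a) (hc : c ≤ n) :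
    Zset n c (step s a) = (Zset n c a).image (phi s c a) := by
  ext x
  simp only [mem_Zset, Finset.mem_image]
  constructor
  · rintro ⟨hx, hv⟩
    unfold step mv at hv
    by_cases hq : (x + s) % 2 = 0
    · rw [if_pos hq] at hv
      by_cases h1 : a (x+1) < a x
      · rw [if_pos h1] at hv
        by_cases h2 : a x < c
        · exact ⟨x, ⟨hx, h2⟩, by unfold phi; rw [if_neg (by omega)]⟩
        · refine ⟨x+1, ⟨?_, hv⟩, ?_⟩
          · by_contra hcon
            have : a (x+1) = x + 1 := hp.1 _ (by omega)
            omega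
          · unfold phi
            rw [if_pos ⟨by omega, by omega, by simpa using (by omega : c ≤ a x)⟩]
            omega
      · rw [if_neg h1] at hv
        exact ⟨x, ⟨hx, hv⟩, by unfold phi; rw [if_neg (by omega)]⟩
    · rw [if_neg hq] at hv
      by_cases h1 : a x < a (x-1)
      · rw [if_pos h1] at hv
        exact ⟨x, ⟨hx, by omega⟩, by unfold phi; rw [if_neg (by omega)]⟩
      · rw [if_neg h1] at hv
        refine ⟨x, ⟨hx, hv⟩, ?_⟩
        unfold phi
        rcases Nat.eq_zero_or_pos x with h0 | h0
        · rw [if_neg (by omega)]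
        · rw [if_neg (by intro ⟨_, _, hge⟩; omega)]
  · rintro ⟨p, ⟨hpn, hpc⟩, rfl⟩
    unfold phi
    split_ifs with hcond
    · obtain ⟨hpar, hpos, hge⟩ := hcond
      refine ⟨by omega, ?_⟩
      unfold step mv
      rw [if_pos (by omega : (p - 1 + s) % 2 = 0)]
      have h1 : p - 1 + 1 = p := by omega
      rw [h1, if_pos (by omega)]
      omega
    · refine ⟨hpn, ?_⟩
      unfold step mv
      by_cases hq : (p + s) % 2 = 0
      · rw [if_pos hq]
        split_ifs with h1 <;> omega
      · rw [if_neg hq]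
        split_ifs with h1
        · rcases Nat.eq_zero_or_pos p with h0 | h0
          · subst h0; simpa using hpc
          · have : a (p-1) < c := by
              by_contra hcon
              exact hcond ⟨by omega, h0, by omega⟩
            omega
        · exact hpc

lemma phi_strictMonoOn {n c s : ℕ} {a : ℕ → ℕ} :
    ∀ p ∈ Zset n c a, ∀ p' ∈ Zset n c a, p < p' → phi s c a p < phi s c a p' := by
  intro p hp p' hp' hlt
  rw [mem_Zset] at hp hp'
  have h1 : phi s c a p ≤ p := by unfold phi; split_ifs <;> omega
  unfold phi
  by_cases h' : (p' + s) % 2 = 1 ∧ 0 < p' ∧ c ≤ a (p' - 1)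
  · rw [if_pos h']
    have hne : p ≠ p' - 1 := by
      intro h; rw [h] at hp; exact absurd h'.2.2 (by omega)
    split_ifs <;> omega
  · rw [if_neg h']
    split_ifs <;> omega

lemma phi_injOn {n c s : ℕ} {a : ℕ → ℕ} :
    Set.InjOn (phi s c a) ↑(Zset n c a) := by
  intro p hp p' hp' heq
  rcases lt_trichotomy p p' with h | h | h
  · have := phi_strictMonoOn (n := n) (s := s) p hp p' hp' h; omega
  · exact h
  · have := phi_strictMonoOn (n := n) (s := s) p' hp' p hp h; omega

lemma card_Z_step {n c s : ℕ} {a : ℕ → ℕ} (hp : Pad n a) (hc : c ≤ n) :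
    (Zset n c (step s a)).card = (Zset n c a).card := by
  rw [Z_step hp hc]
  exact Finset.card_image_of_injOn phi_injOn



section Core

variable {n c : ℕ} {a0 : ℕ → ℕ}

lemma card_Z (hpad : Pad n a0) (hc : c ≤ n) (hbase : (Zset n c a0).card = c) :
    ∀ t, (Zset n c (traj a0 t)).card = c := by
  intro t
  induction t with
  | zero => exact hbase
  | succ t ih =>
    have : Zset n c (traj a0 (t+1)) = Zset n c (step (t+1) (traj a0 t)) := rfl
    rw [this, card_Z_step (pad_traj n hpad t) hc, ih]

/-- Position of the `r`-th leftmost zero (value `< c`) at time `t`. -/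
def qe (hpad : Pad n a0) (hc : c ≤ n) (hbase : (Zset n c a0).card = c)
    (t : ℕ) : Fin c ↪o ℕ :=
  (Zset n c (traj a0 t)).orderEmbOfFin (card_Z hpad hc hbase t)

variable (hpad : Pad n a0) (hc : c ≤ n) (hbase : (Zset n c a0).card = c)

lemma q_mem (t : ℕ) (r : Fin c) :
    qe hpad hc hbase t r ∈ Zset n c (traj a0 t) :=
  Finset.orderEmbOfFin_mem _ _ r

lemma q_lt (t : ℕ) (r : Fin c) :
    qe hpad hc hbase t r < n ∧ traj a0 t (qe hpad hc hbase t r) < c :=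
  mem_Zset.1 (q_mem hpad hc hbase t r)

lemma le_q (t : ℕ) (r : Fin c) : (r : ℕ) ≤ qe hpad hc hbase t r := by
  obtain ⟨rv, hr⟩ := r
  induction rv with
  | zero => exact Nat.zero_le _
  | succ k ih =>
    have h1 : qe hpad hc hbase t ⟨k, by omega⟩ < qe hpad hc hbase t ⟨k+1, hr⟩ :=
      (qe hpad hc hbase t).strictMono (by simp [Fin.lt_def])
    have h2 := ih (by omega)
    simpa using Nat.lt_of_le_of_lt h2 h1

lemma q_step (t : ℕ) (r : Fin c) :
    qe hpad hc hbase (t+1) r = phi (t+1) c (traj a0 t) (qe hpad hc hbase t r) := by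
  have hmem : ∀ x : Fin c,
      phi (t+1) c (traj a0 t) (qe hpad hc hbase t x) ∈ Zset n c (traj a0 (t+1)) := by
    intro x
    have : Zset n c (traj a0 (t+1)) = (Zset n c (traj a0 t)).image (phi (t+1) c (traj a0 t)) :=
      Z_step (pad_traj n hpad t) hc
    rw [this]
    exact Finset.mem_image.2 ⟨_, q_mem hpad hc hbase t x, rfl⟩
  have hmono : StrictMono (fun x : Fin c => phi (t+1) c (traj a0 t) (qe hpad hc hbase t x)) := by
    intro x y hxy
    exact phi_strictMonoOn (n := n) _ (q_mem hpad hc hbase t x) _ (q_mem hpad hc hbase t y)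
      ((qe hpad hc hbase t).strictMono hxy)
  have := Finset.orderEmbOfFin_unique (card_Z hpad hc hbase (t+1)) hmem hmono
  exact (congrFun this r).symm

lemma q_settled_stay (t : ℕ) (r : Fin c) (h : qe hpad hc hbase t r = r) :
    qe hpad hc hbase (t+1) r = r := by
  rw [q_step hpad hc hbase t r, h]
  unfold phi
  split_ifs with hcond
  · exfalso
    obtain ⟨hpar, hpos, hge⟩ := hcond
    have hr1 : ((r : ℕ) - 1) < c := by omega
    have hlt : qe hpad hc hbase t ⟨(r : ℕ) - 1, hr1⟩ < qe hpad hc hbase t r :=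
      (qe hpad hc hbase t).strictMono (by simp [Fin.lt_def]; omega)
    have hle := le_q hpad hc hbase t ⟨(r : ℕ) - 1, hr1⟩
    rw [h] at hlt
    have heq : qe hpad hc hbase t ⟨(r : ℕ) - 1, hr1⟩ = (r : ℕ) - 1 := by
      simp at hle ⊢; omega
    have := (q_lt hpad hc hbase t ⟨(r : ℕ) - 1, hr1⟩).2
    rw [heq] at this
    omega
  · rfl

lemma q_below (t : ℕ) (r : Fin c) {x : ℕ} (hx : x ∈ Zset n c (traj a0 t))
    (hlt : x < qe hpad hc hbase t r) : ∃ j : Fin c, (j : ℕ) < (r : ℕ) ∧ qe hpad hc hbase t j = x := by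
  have : x ∈ Set.range (qe hpad hc hbase t) := by
    unfold qe
    rw [Finset.range_orderEmbOfFin]
    exact hx
  obtain ⟨j, hj⟩ := this
  refine ⟨j, ?_, hj⟩
  have : j < r := by
    by_contra hcon
    have : r ≤ j := le_of_not_gt hcon
    have := (qe hpad hc hbase t).monotone this
    omega
  exact this

/-- Key invariant: from time `rv + 1` on, the `rv`-th zero is settled or
its left comparison is active at the next round. -/
lemma sync : ∀ (rv : ℕ) (hr : rv < c) (t : ℕ), rv < t →
    qe hpad hc hbase t ⟨rv, hr⟩ = rv ∨ (qe hpad hc hbase t ⟨rv, hr⟩ + t) % 2 = 0 := by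
  intro rv
  induction rv using Nat.strong_induction_on with
  | _ rv IH =>
    intro hr t ht
    obtain ⟨t', rfl⟩ : ∃ t', t = t' + 1 := ⟨t - 1, by omega⟩
    by_cases hset : qe hpad hc hbase t' ⟨rv, hr⟩ = rv
    · left; exact q_settled_stay hpad hc hbase t' _ hset
    · have hle := le_q hpad hc hbase t' ⟨rv, hr⟩
      simp only [] at hle
      set p := qe hpad hc hbase t' ⟨rv, hr⟩ with hp
      have hrvp : rv < p := by
        rcases Nat.lt_or_ge rv p with h | h
        · exact h
        · exfalso; exact hset (by omega)
      rw [q_step hpad hc hbase t' ⟨rv, hr⟩]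
      by_cases hact : (p + t') % 2 = 0
      · by_cases hge : c ≤ traj a0 t' (p - 1)
        · unfold phi
          rw [if_pos ⟨by omega, by omega, hge⟩]
          right; omega
        · exfalso
          have hmem : p - 1 ∈ Zset n c (traj a0 t') :=
            mem_Zset.2 ⟨by have := (q_lt hpad hc hbase t' ⟨rv, hr⟩).1; omega, by omega⟩
          obtain ⟨j, hj, hjq⟩ := q_below hpad hc hbase t' ⟨rv, hr⟩ hmem (by omega)
          simp only [] at hj
          rcases IH j (by omega) j.isLt t' (by omega) with hs | hpar
          · rw [Fin.eta] at hs
            rw [hs] at hjq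
            omega
          · rw [Fin.eta] at hpar
            rw [hjq] at hpar
            omega
      · unfold phi
        rw [if_neg (by intro hcon; omega)]
        right; omega

lemma q_progress (rv : ℕ) (hr : rv < c) (t : ℕ) (ht : rv < t) :
    qe hpad hc hbase (t+1) ⟨rv, hr⟩ = rv ∨
      qe hpad hc hbase (t+1) ⟨rv, hr⟩ + 1 ≤ qe hpad hc hbase t ⟨rv, hr⟩ := by
  by_cases hset : qe hpad hc hbase t ⟨rv, hr⟩ = rv
  · left; exact q_settled_stay hpad hc hbase t _ hset
  · have hle := le_q hpad hc hbase t ⟨rv, hr⟩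
    simp only [] at hle
    set p := qe hpad hc hbase t ⟨rv, hr⟩ with hp
    have hrvp : rv < p := by
      rcases Nat.lt_or_ge rv p with h | h
      · exact h
      · exfalso; exact hset (by omega)
    have hact : (p + t) % 2 = 0 := by
      rcases sync hpad hc hbase rv hr t ht with h | h
      · exact absurd h hset
      · exact h
    by_cases hge : c ≤ traj a0 t (p - 1)
    · right
      rw [q_step hpad hc hbase t ⟨rv, hr⟩]
      unfold phi
      rw [if_pos ⟨by omega, by omega, hge⟩]
      omega
    · exfalso
      have hmem : p - 1 ∈ Zset n c (traj a0 t) :=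
        mem_Zset.2 ⟨by have := (q_lt hpad hc hbase t ⟨rv, hr⟩).1; omega, by omega⟩
      obtain ⟨j, hj, hjq⟩ := q_below hpad hc hbase t ⟨rv, hr⟩ hmem (by omega)
      simp only [] at hj
      rcases sync hpad hc hbase j j.isLt t (by omega) with hs | hpar
      · rw [Fin.eta] at hs
        rw [hs] at hjq
        omega
      · rw [Fin.eta] at hpar
        rw [hjq] at hpar
        omega

lemma q_final (rv : ℕ) (hr : rv < c) : qe hpad hc hbase n ⟨rv, hr⟩ = rv := by
  have hn : 1 ≤ n := by omega
  have key : ∀ j, qe hpad hc hbase (rv + 1 + j) ⟨rv, hr⟩ = rv ∨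
      qe hpad hc hbase (rv + 1 + j) ⟨rv, hr⟩ + j ≤ n - 1 := by
    intro j
    induction j with
    | zero =>
      right
      have := (q_lt hpad hc hbase (rv + 1 + 0) ⟨rv, hr⟩).1
      omega
    | succ j ih =>
      have hstep := q_progress hpad hc hbase rv hr (rv + 1 + j) (by omega)
      have harr : rv + 1 + (j + 1) = (rv + 1 + j) + 1 := by omega
      rw [harr]
      rcases ih with h | h
      · left; exact q_settled_stay hpad hc hbase _ _ h
      · rcases hstep with h2 | h2
        · left; exact h2
        · right; omega
  have hrn : rv ≤ n - 1 := by omega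
  have := key (n - 1 - rv)
  have harr : rv + 1 + (n - 1 - rv) = n := by omega
  rw [harr] at this
  have hle := le_q hpad hc hbase n ⟨rv, hr⟩
  simp only [] at hle
  rcases this with h | h
  · exact h
  · omega

end Core

lemma Z_final {n c : ℕ} {a0 : ℕ → ℕ} (hpad : Pad n a0) (hc : c ≤ n)
    (hbase : (Zset n c a0).card = c) : Zset n c (traj a0 n) = Finset.range c := by
  ext x
  simp only [Finset.mem_range]
  constructor
  · intro hx
    have : x ∈ Set.range (qe hpad hc hbase n) := by
      unfold qe
      rw [Finset.range_orderEmbOfFin]; exact hx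
    obtain ⟨j, hj⟩ := this
    have := q_final hpad hc hbase j j.isLt
    rw [Fin.eta] at this
    rw [this] at hj
    omega
  · intro hx
    have := q_final hpad hc hbase x hx
    rw [← this]
    exact q_mem hpad hc hbase n ⟨x, hx⟩

theorem traj_id (n : ℕ) (a0 : ℕ → ℕ) (hpad : Pad n a0)
    (hbase : ∀ c, c ≤ n → (Zset n c a0).card = c) :
    ∀ i, traj a0 n i = i := by
  intro i
  rcases Nat.lt_or_ge i n with hi | hi
  · have key : ∀ cc, cc ≤ n → (traj a0 n i < cc ↔ i < cc) := by
      intro cc hcc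
      have hZ := Z_final hpad hcc (hbase cc hcc)
      constructor
      · intro h
        have : i ∈ Zset n cc (traj a0 n) := mem_Zset.2 ⟨hi, h⟩
        rw [hZ] at this
        simpa using this
      · intro h
        have : i ∈ Finset.range cc := by simpa using h
        rw [← hZ] at this
        exact (mem_Zset.1 this).2
    have h1 : traj a0 n i < i + 1 := (key (i+1) (by omega)).2 (by omega)
    rcases Nat.eq_zero_or_pos i with h0 | h0
    · omega
    · have h2 : ¬ (traj a0 n i < i) := by
        rw [key i (by omega)]; omega
      omega
  · exact (pad_traj n hpad n).1 i hi


/-- The round-`t+1` move map as a function on `Fin n`. -/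
def Ffin (n : ℕ) (a0 : ℕ → ℕ) (hpad : Pad n a0) (t : ℕ) : Fin n → Fin n :=
  fun v => ⟨mv (t+1) (traj a0 t) v.val, mv_lt n (t+1) (pad_traj n hpad t) v.isLt⟩

lemma Ffin_val (n : ℕ) (a0 : ℕ → ℕ) (hpad : Pad n a0) (t : ℕ) (v : Fin n) :
    (Ffin n a0 hpad t v).val = mv (t+1) (traj a0 t) v.val := rfl

lemma Ffin_matching (n : ℕ) (a0 : ℕ → ℕ) (hpad : Pad n a0) (t : ℕ) :
    IsMatchingPerm (pathGraph n) (Ffin n a0 hpad t) := by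
  constructor
  · intro v
    apply Fin.ext
    rw [Ffin_val, Ffin_val]
    exact mv_involutive (t+1) (traj a0 t) v.val
  · intro v
    rcases mv_cases (t+1) (traj a0 t) v.val with h | ⟨h, _⟩ | ⟨hp, h, _⟩
    · left; exact Fin.ext h
    · right
      rw [pathGraph, SimpleGraph.fromRel_adj]
      have hv := Ffin_val n a0 hpad t v
      refine ⟨?_, Or.inl ?_⟩
      · intro heq
        have := congrArg Fin.val heq
        omega
      · omega
    · right
      rw [pathGraph, SimpleGraph.fromRel_adj]
      have hv := Ffin_val n a0 hpad t v
      refine ⟨?_, Or.inr ?_⟩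
      · intro heq
        have := congrArg Fin.val heq
        omega
      · omega

lemma foldr_comp_assoc {α : Type*} : ∀ (l : List (α → α)) (g : α → α),
    l.foldr (· ∘ ·) g = (l.foldr (· ∘ ·) id) ∘ g := by
  intro l
  induction l with
  | nil => intro g; rfl
  | cons f l ih =>
    intro g
    show f ∘ (l.foldr (· ∘ ·) g) = _
    rw [ih]
    rfl

/-- Composite of the first `k` move maps (round 1 applied last in composition order). -/
def gnat (a0 : ℕ → ℕ) (k : ℕ) : ℕ → ℕ :=
  ((List.range k).map (fun t => mv (t+1) (traj a0 t))).foldr (· ∘ ·) id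

lemma gnat_succ (a0 : ℕ → ℕ) (k : ℕ) :
    gnat a0 (k+1) = gnat a0 k ∘ mv (k+1) (traj a0 k) := by
  unfold gnat
  rw [List.range_succ, List.map_append, List.foldr_append]
  simp only [List.map_cons, List.map_nil, List.foldr_cons, List.foldr_nil]
  rw [foldr_comp_assoc]
  funext x
  rfl

lemma traj_eq_gnat (a0 : ℕ → ℕ) : ∀ k, traj a0 k = a0 ∘ gnat a0 k := by
  intro k
  induction k with
  | zero => rfl
  | succ k ih =>
    funext i
    show traj a0 k (mv (k+1) (traj a0 k) i) = _
    rw [gnat_succ, ih]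
    rfl

lemma fold_val (n : ℕ) (a0 : ℕ → ℕ) (hpad : Pad n a0) :
    ∀ (k : ℕ) (v : Fin n),
      ((((List.range k).map (Ffin n a0 hpad)).foldr (· ∘ ·) id) v).val
        = gnat a0 k v.val := by
  intro k
  induction k with
  | zero => intro v; rfl
  | succ k ih =>
    intro v
    rw [List.range_succ, List.map_append, List.foldr_append]
    simp only [List.map_cons, List.map_nil, List.foldr_cons, List.foldr_nil]
    rw [foldr_comp_assoc]
    show ((((List.range k).map (Ffin n a0 hpad)).foldr (· ∘ ·) id) (Ffin n a0 hpad k v)).val = _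
    rw [ih, gnat_succ]
    rfl

end PTS

/-- every instance of parallel token swapping on the path `P_n`
has a solution using at most `n` matchings. -/
theorem stmt_1 (n : ℕ) (C : Fin n ≃ Fin n) :
    ∃ ms : List (Fin n → Fin n), Solves (pathGraph n) (⇑C) ms ∧ ms.length ≤ n := by
  classical
  set a0 : ℕ → ℕ := fun i => if h : i < n then ((C ⟨i, h⟩ : Fin n) : ℕ) else i with ha0
  have ha0lt : ∀ i (h : i < n), a0 i = ((C ⟨i, h⟩ : Fin n) : ℕ) := by
    intro i h; simp only [ha0, dif_pos h]
  have hpad : PTS.Pad n a0 := by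
    constructor
    · intro i hi; simp only [ha0, dif_neg (Nat.not_lt.2 hi)]
    · intro i hi; rw [ha0lt i hi]; exact (C ⟨i, hi⟩).isLt
  have hbase : ∀ c, c ≤ n → (PTS.Zset n c a0).card = c := by
    intro c hcn
    rw [show c = (Finset.range c).card from (Finset.card_range c).symm]
    apply Finset.card_bij (fun (i : ℕ) _ => a0 i)
    · intro i hi
      rw [PTS.mem_Zset] at hi
      simpa [Finset.mem_range] using hi.2
    · intro i hi j hj heq
      rw [PTS.mem_Zset] at hi hj
      rw [ha0lt i hi.1, ha0lt j hj.1] at heq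
      have := C.injective (Fin.ext heq)
      simpa using congrArg Fin.val this
    · intro j hj
      rw [Finset.mem_range] at hj
      have hjn : j < n := lt_of_lt_of_le hj hcn
      refine ⟨(C.symm ⟨j, hjn⟩ : ℕ), ?_, ?_⟩
      · rw [PTS.mem_Zset]
        refine ⟨(C.symm ⟨j, hjn⟩).isLt, ?_⟩
        rw [ha0lt _ (C.symm ⟨j, hjn⟩).isLt]
        simp [hj]
      · rw [ha0lt _ (C.symm ⟨j, hjn⟩).isLt]
        simp
  refine ⟨(List.range n).map (PTS.Ffin n a0 hpad), ⟨?_, ?_⟩, by simp⟩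
  · intro m hm
    rw [List.mem_map] at hm
    obtain ⟨t, _, rfl⟩ := hm
    exact PTS.Ffin_matching n a0 hpad t
  · funext v
    unfold routeSeq
    apply Fin.ext
    show (C ((((List.range n).map (PTS.Ffin n a0 hpad)).foldr (· ∘ ·) id) v) : Fin n).val = v.val
    set w := (((List.range n).map (PTS.Ffin n a0 hpad)).foldr (· ∘ ·) id) v with hw
    have h1 : ((C w : Fin n) : ℕ) = a0 w.val := by
      rw [ha0lt w.val w.isLt]
    rw [h1]
    have h2 : w.val = PTS.gnat a0 n v.val := PTS.fold_val n a0 hpad n v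
    rw [h2]
    have h3 : a0 (PTS.gnat a0 n v.val) = PTS.traj a0 n v.val := by
      rw [PTS.traj_eq_gnat a0 n]; rfl
    rw [h3]
    exact PTS.traj_id n a0 hpad hbase v.val
end

section
/- Let n = 2r ≥ 4 be even and let G be the cycle graph on vertices {1,…,n} with edges (i,i+1) for 1 ≤ i ≤ n−1 together with (n,1). Let C be the cyclic rotation configuration defined by C(i) = i−1 for 2 ≤ i ≤ n and C(1) = n. Then every sequence of matchings solving the instance (G,C) has length at least n−1. -/
/-- The cycle graph on vertices `{0, …, n-1}` (representing `{1, …, n}`),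
with edges `(i, i+1)` for `i < n-1` together with `(n-1, 0)`. -/
def cycleGraph (n : ℕ) : SimpleGraph (Fin n) :=
  SimpleGraph.fromRel fun i j => (i.val + 1) % n = j.val

/-- The cyclic rotation configuration: `C i = i - 1 (mod n)`, i.e. (1-indexed)
`C(i) = i-1` for `2 ≤ i ≤ n` and `C(1) = n`. -/
def rotDown (n : ℕ) : Fin n → Fin n := fun i =>
  if i.val = 0 then ⟨n - 1, Nat.sub_lt i.pos Nat.one_pos⟩
  else ⟨i.val - 1, lt_of_le_of_lt (Nat.sub_le _ _) i.isLt⟩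

open Finset

lemma Int.exists_le_one_sub_of_sum_eq_zero {ι : Type*} [Fintype ι] [Nonempty ι] {n : ℕ}
    {d : ι → ℤ} (hsum : ∑ i, d i = 0) (hd : ∀ i, d i ≡ 1 [ZMOD n]) :
    ∃ i, d i ≤ 1 - n := by
  by_contra! hlarge
  have hpos : ∀ i, 1 ≤ d i := by
    intro i
    obtain ⟨k, hk⟩ := Int.modEq_iff_dvd.mp (hd i).symm
    have hk_nonneg : 0 ≤ k := by
      by_contra! hk_neg
      nlinarith [hlarge i]
    nlinarith
  have hcard : (Fintype.card ι : ℤ) ≤ ∑ i, d i := by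
    simpa using Finset.sum_le_sum fun i (_ : i ∈ univ) => hpos i
  have := Fintype.card_pos (α := ι)
  omega

lemma bijective_foldr_comp {α : Type*} {fs : List (α → α)} (h : ∀ f ∈ fs, f.Bijective) :
    (fs.foldr (· ∘ ·) id).Bijective := by
  induction fs with
  | nil => exact Function.bijective_id
  | cons f fs ih => exact (h f (by simp)).comp (ih fun g hg => h g (by simp [hg]))

lemma cycleGraph_adj_sub_eq {n : ℕ} {v w : Fin n} (h : (cycleGraph n).Adj v w) :
    (w.val : ZMod n) - v.val = 1 ∨ (w.val : ZMod n) - v.val = -1 := by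
  rw [cycleGraph, SimpleGraph.fromRel_adj] at h
  rcases h.2 with h | h
  · left
    rw [← h, ZMod.natCast_mod]
    push_cast
    ring
  · right
    rw [← h, ZMod.natCast_mod]
    push_cast
    ring

lemma natCast_val_rotDown {n : ℕ} (i : Fin n) :
    ((rotDown n i).val : ZMod n) = i.val - 1 := by
  unfold rotDown
  split_ifs with h
  · simp [h, Nat.cast_sub (i.pos : 0 < n)]
  · push_cast [Nat.cast_sub (Nat.one_le_iff_ne_zero.mpr h)]
    ring

/-- The step `m v - v` along the cycle, lifted to `ℤ` as its representative in `(-n/2, n/2]`. -/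
def cycleStep {n : ℕ} (m : Fin n → Fin n) (v : Fin n) : ℤ :=
  (((m v).val : ZMod n) - v.val).valMinAbs

section cycleStep

variable {n : ℕ} {m : Fin n → Fin n}

lemma natCast_val_apply_eq_add_cycleStep (m : Fin n → Fin n) (v : Fin n) :
    ((m v).val : ZMod n) = v.val + cycleStep m v := by
  simp [cycleStep]

lemma abs_cycleStep_le_one (hm : IsMatchingPerm (cycleGraph n) m) (v : Fin n) :
    |cycleStep m v| ≤ 1 := by
  have : NeZero n := NeZero.of_pos v.pos
  have hone : ((1 : ZMod n).valMinAbs.natAbs : ℤ) ≤ 1 := by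
    rw [ZMod.valMinAbs_natAbs_eq_min, ZMod.val_one_eq_one_mod]
    exact_mod_cast (min_le_left _ _).trans (Nat.mod_le 1 n)
  rcases hm.2 v with hfix | hadj
  · simp [cycleStep, hfix]
  · rw [cycleStep, Int.abs_eq_natAbs]
    rcases cycleGraph_adj_sub_eq hadj with h | h <;>
      simpa only [h, ZMod.natAbs_valMinAbs_neg] using hone

lemma cycleStep_add_cycleStep_apply (hn : 3 ≤ n) (hm : IsMatchingPerm (cycleGraph n) m)
    (v : Fin n) : cycleStep m v + cycleStep m (m v) = 0 := by
  have hdvd : (n : ℤ) ∣ cycleStep m v + cycleStep m (m v) := by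
    rw [← ZMod.intCast_zmod_eq_zero_iff_dvd]
    push_cast [cycleStep, ZMod.coe_valMinAbs, hm.1 v]
    ring
  refine Int.eq_zero_of_abs_lt_dvd hdvd ?_
  calc |cycleStep m v + cycleStep m (m v)|
      ≤ |cycleStep m v| + |cycleStep m (m v)| := abs_add_le _ _
    _ ≤ 2 := by linarith [abs_cycleStep_le_one hm v, abs_cycleStep_le_one hm (m v)]
    _ < n := by omega

lemma sum_cycleStep (hn : 3 ≤ n) (hm : IsMatchingPerm (cycleGraph n) m) :
    ∑ v, cycleStep m v = 0 :=
  Finset.sum_ninvolution m (cycleStep_add_cycleStep_apply hn hm)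
    (fun v hv hfix => hv (by simp [cycleStep, hfix])) (fun _ => mem_univ _) hm.1

end cycleStep

/-- The sum of the steps of the walk `v, m_k v, m_{k-1} (m_k v), …` for `ms = [m_1, …, m_k]`:
the token ending at `v` travels this walk backwards. -/
def cycleDisplacement {n : ℕ} : List (Fin n → Fin n) → Fin n → ℤ
  | [], _ => 0
  | m :: ms, v => cycleStep m (ms.foldr (· ∘ ·) id v) + cycleDisplacement ms v

section cycleDisplacement

variable {n : ℕ} {ms : List (Fin n → Fin n)}

lemma natCast_val_foldr_eq_add_cycleDisplacement (ms : List (Fin n → Fin n)) (v : Fin n) :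
    ((ms.foldr (· ∘ ·) id v).val : ZMod n) = v.val + cycleDisplacement ms v := by
  induction ms with
  | nil => simp [cycleDisplacement]
  | cons m ms ih =>
    simp only [List.foldr_cons, Function.comp_apply, cycleDisplacement]
    rw [natCast_val_apply_eq_add_cycleStep, ih]
    push_cast
    ring

lemma abs_cycleDisplacement_le_length (hms : ∀ m ∈ ms, IsMatchingPerm (cycleGraph n) m)
    (v : Fin n) : |cycleDisplacement ms v| ≤ ms.length := by
  induction ms with
  | nil => simp [cycleDisplacement]
  | cons m ms ih =>
    have hstep := abs_cycleStep_le_one (hms m (by simp)) (ms.foldr (· ∘ ·) id v)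
    have hrest := ih fun m' hm' => hms m' (by simp [hm'])
    calc |cycleDisplacement (m :: ms) v|
        ≤ |cycleStep m (ms.foldr (· ∘ ·) id v)| + |cycleDisplacement ms v| := abs_add_le _ _
      _ ≤ (m :: ms).length := by push_cast [List.length_cons]; linarith

lemma sum_cycleDisplacement (hn : 3 ≤ n) (hms : ∀ m ∈ ms, IsMatchingPerm (cycleGraph n) m) :
    ∑ v, cycleDisplacement ms v = 0 := by
  induction ms with
  | nil => simp [cycleDisplacement]
  | cons m ms ih =>
    have hrest : ∀ m' ∈ ms, IsMatchingPerm (cycleGraph n) m' :=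
      fun m' hm' => hms m' (by simp [hm'])
    simp only [cycleDisplacement, sum_add_distrib, ih hrest, add_zero]
    rw [(bijective_foldr_comp fun f hf => (hrest f hf).1.bijective).sum_comp (cycleStep m)]
    exact sum_cycleStep hn (hms m (by simp))

lemma cycleDisplacement_modEq_one (hsolve : routeSeq (rotDown n) ms = id) (v : Fin n) :
    cycleDisplacement ms v ≡ 1 [ZMOD n] := by
  rw [← ZMod.intCast_eq_intCast_iff]
  have hrot := natCast_val_rotDown (ms.foldr (· ∘ ·) id v)
  rw [show rotDown n (ms.foldr (· ∘ ·) id v) = v from congrFun hsolve v,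
    natCast_val_foldr_eq_add_cycleDisplacement] at hrot
  push_cast
  linear_combination -hrot

end cycleDisplacement

theorem stmt_2_general (n : ℕ) (hn : 4 ≤ n)
    (ms : List (Fin n → Fin n)) (hms : Solves (cycleGraph n) (rotDown n) ms) :
    n - 1 ≤ ms.length := by
  obtain ⟨hmatch, hsolve⟩ := hms
  have : Nonempty (Fin n) := ⟨⟨0, by omega⟩⟩
  obtain ⟨v, hv⟩ := Int.exists_le_one_sub_of_sum_eq_zero
    (sum_cycleDisplacement (by omega) hmatch) (cycleDisplacement_modEq_one hsolve)
  have hlen := abs_le.mp (abs_cycleDisplacement_le_length hmatch v)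
  omega

/-- on the even cycle of length `n = 2r ≥ 4`, every solution of the
cyclic-rotation instance has length at least `n - 1`. -/
theorem stmt_2 (n : ℕ) (hn : 4 ≤ n) (heven : Even n)
    (ms : List (Fin n → Fin n)) (hms : Solves (cycleGraph n) (rotDown n) ms) :
    n - 1 ≤ ms.length :=
  stmt_2_general n hn ms hms
end

section
/- Let P_n be the path graph with vertex set {1,…,n} and edges (i,i+1) for 1 ≤ i ≤ n−1, and let C be a configuration on P_n with d_max ≥ 1, where d_max = max_v |v − C(v)| is the maximum geodesic distance between a token's current vertex and its destination. Then there exists a sequence of at most 2·d_max matchings solving the instance (P_n, C); in particular the stretch factor of the lower bound d_max on line graphs is at most 2. -/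
namespace OddEvenSort

open Finset

variable {n : ℕ}

def partner (t : ℕ) (i : Fin n) : Fin n :=
  if i.val % 2 = t % 2 then
    if h : i.val + 1 < n then ⟨i.val + 1, h⟩ else i
  else
    if h : i.val ≠ 0 then ⟨i.val - 1, by omega⟩ else i

lemma partner_involutive (t : ℕ) : Function.Involutive (partner (n := n) t) := by
  intro i
  unfold partner
  split_ifs <;> simp_all [Fin.ext_iff] <;> omega

lemma partner_eq_or_adj (t : ℕ) (i : Fin n) :
    partner t i = i ∨ (pathGraph n).Adj i (partner t i) := by
  unfold partner pathGraph
  split_ifs <;> simp [SimpleGraph.fromRel_adj, Fin.ext_iff]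
  omega

lemma partner_of_mod_eq {t : ℕ} {i : Fin n} (hi : i.val % 2 = t % 2) (h : i.val + 1 < n) :
    partner t i = ⟨i.val + 1, h⟩ := by
  simp [partner, hi, h]

def round (t : ℕ) (f : Fin n → Fin n) (i : Fin n) : Fin n :=
  if f (max i (partner t i)) < f (min i (partner t i)) then partner t i else i

lemma round_involutive (t : ℕ) (f : Fin n → Fin n) : Function.Involutive (round t f) := by
  intro i
  by_cases h : f (max i (partner t i)) < f (min i (partner t i))
  · have h' : f (max (partner t i) i) < f (min (partner t i) i) := by rwa [max_comm, min_comm]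
    simp only [round, if_pos h, partner_involutive t i, if_pos h']
  · simp only [round, if_neg h]

lemma isMatchingPerm_round (t : ℕ) (f : Fin n → Fin n) :
    IsMatchingPerm (pathGraph n) (round t f) := by
  refine ⟨round_involutive t f, fun i => ?_⟩
  unfold round
  split_ifs
  · exact partner_eq_or_adj t i
  · exact Or.inl rfl

lemma round_lt_of_lt {t : ℕ} {f : Fin n → Fin n} {a : Fin n} (h : a < round t f a) :
    f (round t f a) < f a := by
  unfold round at *
  split_ifs at * with hlt
  · rwa [max_eq_right h.le, min_eq_left h.le] at hlt
  · exact absurd h (lt_irrefl a)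

lemma round_of_lt {t : ℕ} {f : Fin n → Fin n} {i : Fin n} (hi : i.val % 2 = t % 2)
    (h : i.val + 1 < n) (hlt : f ⟨i.val + 1, h⟩ < f i) : round t f i = ⟨i.val + 1, h⟩ := by
  have hle : i ≤ ⟨i.val + 1, h⟩ := Fin.le_def.mpr (Nat.le_succ _)
  simp only [round, partner_of_mod_eq hi h, max_eq_right hle, min_eq_left hle, if_pos hlt]

def largeCount (f : Fin n → Fin n) (c : ℕ) (y : ℤ) : ℕ :=
  #{i | y ≤ (i.val : ℤ) ∧ c < (f i).val}

lemma largeCount_antitone (f : Fin n → Fin n) (c : ℕ) : Antitone (largeCount f c) :=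
  fun _ _ hy => card_le_card fun _ hi => by
    simp only [mem_filter, mem_univ, true_and] at hi ⊢
    exact ⟨hy.trans hi.1, hi.2⟩

lemma largeCount_eq_succ_add (f : Fin n → Fin n) (c : ℕ) (y : ℤ) :
    largeCount f c y = largeCount f c (y + 1) + #{i | (i.val : ℤ) = y ∧ c < (f i).val} := by
  rw [largeCount, largeCount, ← card_union_of_disjoint, ← filter_or]
  · congr 1; ext i; simp only [mem_filter, mem_univ, true_and]; omega
  · exact disjoint_filter.2 fun i _ h1 h2 => by omega

lemma largeCount_le_succ_add_one (f : Fin n → Fin n) (c : ℕ) (y : ℤ) :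
    largeCount f c y ≤ largeCount f c (y + 1) + 1 := by
  rw [largeCount_eq_succ_add]
  gcongr
  exact card_le_one.2 fun a ha b hb => by simp only [mem_filter] at ha hb; omega

lemma exists_of_largeCount_succ_lt {f : Fin n → Fin n} {c : ℕ} {y : ℤ}
    (h : largeCount f c (y + 1) < largeCount f c y) :
    ∃ i : Fin n, (i.val : ℤ) = y ∧ c < (f i).val := by
  rw [largeCount_eq_succ_add f c y] at h
  obtain ⟨i, hi⟩ := card_pos.1 (by omega : 0 < #{i : Fin n | (i.val : ℤ) = y ∧ c < (f i).val})
  exact ⟨i, (mem_filter.1 hi).2⟩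

lemma largeCount_succ_lt {f : Fin n → Fin n} {c : ℕ} {y : ℤ} (i : Fin n) (hi : (i.val : ℤ) = y)
    (hc : c < (f i).val) : largeCount f c (y + 1) < largeCount f c y := by
  rw [largeCount_eq_succ_add f c y]
  have : 0 < #{i : Fin n | (i.val : ℤ) = y ∧ c < (f i).val} := card_pos.2 ⟨i, by simp [hi, hc]⟩
  omega

/-- A sorting involution moves large values only rightwards, across the cut at `y` and beyond it;
each `j ∈ J` marks a crossing that brings one extra large value into the suffix. -/
lemma largeCount_add_card_le {f m : Fin n → Fin n} {c : ℕ} {y : ℤ} (hm : Function.Involutive m)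
    (hsort : ∀ a, a < m a → f (m a) < f a) (J : Finset (Fin n))
    (hJ : ∀ j ∈ J, y ≤ (j.val : ℤ) ∧ ((m j).val : ℤ) < y ∧ c < (f (m j)).val ∧ (f j).val ≤ c) :
    largeCount f c y + #J ≤ largeCount (f ∘ m) c y := by
  classical
  set src : Finset (Fin n) := {i | y ≤ (i.val : ℤ) ∧ c < (f i).val}
  set φ : Fin n → Fin n := fun a => if y ≤ ((m a).val : ℤ) then m a else a with hφ
  have hmaps : ∀ a ∈ src, y ≤ ((φ a).val : ℤ) ∧ c < (f (m (φ a))).val := by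
    intro a ha
    simp only [src, mem_filter, mem_univ, true_and] at ha
    by_cases hy : y ≤ ((m a).val : ℤ)
    · simpa only [hφ, if_pos hy, hm a] using ⟨hy, ha.2⟩
    · have hlt : m a < m (m a) := by rw [hm a, Fin.lt_def]; omega
      have := hsort (m a) hlt
      rw [hm a, Fin.lt_def] at this
      simp only [hφ, if_neg hy]
      omega
  have hinj : Set.InjOn φ src := by
    intro a ha b hb hab
    simp only [src, coe_filter, mem_univ, true_and, Set.mem_ofPred_eq] at ha hb
    by_cases ha' : y ≤ ((m a).val : ℤ) <;> by_cases hb' : y ≤ ((m b).val : ℤ) <;>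
      simp only [hφ, ha', hb', if_true, if_false] at hab
    · exact hm.injective hab
    · exact (hb' (by rw [← hab, hm a]; exact ha.1)).elim
    · exact (ha' (by rw [hab, hm b]; exact hb.1)).elim
    · exact hab
  have hdisj : Disjoint (src.image φ) J := by
    refine disjoint_left.2 fun j hj hjJ => ?_
    obtain ⟨a, ha, rfl⟩ := mem_image.1 hj
    obtain ⟨-, hmj, -, hsmall⟩ := hJ _ hjJ
    simp only [src, mem_filter, mem_univ, true_and] at ha
    by_cases ha' : y ≤ ((m a).val : ℤ) <;>
      simp only [hφ, ha', if_true, if_false, hm a] at hmj hsmall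
    · omega
    · omega
  calc largeCount f c y + #J = #(src.image φ ∪ J) := by
        rw [card_union_of_disjoint hdisj, card_image_of_injOn hinj]; rfl
    _ ≤ largeCount (f ∘ m) c y := by
        refine card_le_card (union_subset (fun b hb => ?_) fun j hj => ?_)
        · obtain ⟨a, ha, rfl⟩ := mem_image.1 hb
          simpa using hmaps a ha
        · obtain ⟨hj, -, hmj, -⟩ := hJ j hj
          simpa using ⟨hj, hmj⟩

lemma largeCount_le_largeCount_round (t : ℕ) (f : Fin n → Fin n) (c : ℕ) (y : ℤ) :
    largeCount f c y ≤ largeCount (f ∘ round t f) c y := by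
  simpa using largeCount_add_card_le (round_involutive t f) (fun _ h => round_lt_of_lt h) ∅
    (by simp)

lemma largeCount_le_largeCount_round_succ {t : ℕ} {f : Fin n → Fin n} {c : ℕ} (i : Fin n)
    (hi : i.val % 2 = t % 2) (h : i.val + 1 < n) (hic : c < (f i).val)
    (hjc : (f ⟨i.val + 1, h⟩).val ≤ c) :
    largeCount f c i ≤ largeCount (f ∘ round t f) c (i + 1) := by
  have hswap : round t f i = ⟨i.val + 1, h⟩ := round_of_lt hi h (Fin.lt_def.2 (by omega))
  have hback : round t f ⟨i.val + 1, h⟩ = i := by rw [← hswap, round_involutive]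
  have := largeCount_add_card_le (c := c) (y := i + 1) (round_involutive t f)
    (fun _ h => round_lt_of_lt h) {⟨i.val + 1, h⟩} (by
      simp only [mem_singleton, forall_eq, hback]
      refine ⟨?_, ?_, hic, hjc⟩ <;> simp)
  have := largeCount_le_succ_add_one f c i
  simp only [card_singleton] at *
  omega

def orbit (f : Fin n → Fin n) : ℕ → Fin n → Fin n
  | 0 => f
  | t + 1 => orbit f t ∘ round t (orbit f t)

def schedule (f : Fin n → Fin n) (T : ℕ) : List (Fin n → Fin n) :=
  (List.range T).map fun t => round t (orbit f t)

lemma routeSeq_append_singleton {V : Type*} (C : V → V) (ms : List (V → V)) (m : V → V) :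
    routeSeq C (ms ++ [m]) = routeSeq C ms ∘ m := by
  have key : ∀ l : List (V → V), l.foldr (· ∘ ·) m = l.foldr (· ∘ ·) id ∘ m := by
    intro l
    induction l with
    | nil => rfl
    | cons a l ih => simp only [List.foldr_cons, ih]; rfl
  simp only [routeSeq, List.foldr_append, List.foldr_cons, List.foldr_nil, Function.comp_id, key]
  rfl

lemma routeSeq_schedule (f : Fin n → Fin n) (T : ℕ) : routeSeq f (schedule f T) = orbit f T := by
  induction T with
  | zero => rfl
  | succ T ih =>
    rw [schedule, List.range_succ, List.map_append, List.map_singleton, routeSeq_append_singleton,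
      ← schedule, ih, orbit]

lemma orbit_bijective {f : Fin n → Fin n} (hf : Function.Bijective f) (t : ℕ) :
    Function.Bijective (orbit f t) := by
  induction t with
  | zero => exact hf
  | succ t ih => exact ih.comp (round_involutive t _).bijective

lemma largeCount_orbit_mono (f : Fin n → Fin n) (c : ℕ) (y : ℤ) :
    Monotone fun t => largeCount (orbit f t) c y :=
  monotone_nat_of_le_succ fun t => largeCount_le_largeCount_round t (orbit f t) c y

/-- `r ≤ largeCount g c y` says that the `r`-th large value from the right lies at `y` or beyond.
`OnTrack g c γ t r`: after `t` rounds it lies at `γ r + t` or beyond, or is home at `n - r`;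
and when it lies exactly at `γ r + t`, `Even (γ r)` says it is the left end of a comparator of
round `t`. -/
def OnTrack (g : Fin n → Fin n) (c : ℕ) (γ : ℕ → ℤ) (t r : ℕ) : Prop :=
  r ≤ largeCount g c (min ((n : ℤ) - r) (γ r + t)) ∧
    (γ r + t < (n : ℤ) - r → largeCount g c (γ r + t + 1) < r → Even (γ r))

def TracksSeparated (g : Fin n → Fin n) (c k : ℕ) (γ : ℕ → ℤ) : Prop :=
  ∀ r, 2 ≤ r → r ≤ k → largeCount g c ((n : ℤ) - r) < r → γ r + 2 ≤ γ (r - 1)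

/-- If the `r`-th large value sits at `q` and is blocked by the `(r-1)`-th at `q + 1`, then the
latter's track forces `q` ahead of the former's track, with the right parity at equality. -/
lemma le_of_blocked {g : Fin n → Fin n} {c k t r : ℕ} {γ : ℕ → ℤ} {q : ℤ}
    (hsep : TracksSeparated g c k γ) (htrack : ∀ s, 1 ≤ s → s ≤ k → OnTrack g c γ t s)
    (hrk : r ≤ k) (hhome : largeCount g c ((n : ℤ) - r) < r)
    (hq : r ≤ largeCount g c q) (hq1 : largeCount g c (q + 1) < r)
    (j : Fin n) (hj : (j.val : ℤ) = q + 1) (hjc : c < (g j).val) :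
    γ r + t + 1 ≤ q ∧ (γ r + t + 1 = q → Even (γ r)) := by
  have hq2 := largeCount_succ_lt j hj hjc
  have hr : 2 ≤ r := by omega
  have hγ := hsep r hr hrk hhome
  obtain ⟨hpos, hpar⟩ := htrack (r - 1) (by omega) (by omega)
  have hqn : q < (n : ℤ) - r := by
    by_contra h
    have := largeCount_antitone g c (not_lt.1 h)
    omega
  have hmin : min ((n : ℤ) - (r - 1 : ℕ)) (γ (r - 1) + t) < q + 1 + 1 := by
    by_contra h
    have := largeCount_antitone g c (not_lt.1 h)
    omega
  have hγt : γ (r - 1) + t < q + 1 + 1 := (min_lt_iff.1 hmin).resolve_left (by omega)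
  refine ⟨by omega, fun heq => ?_⟩
  have hnext : γ (r - 1) + t + 1 = q + 1 + 1 := by omega
  obtain ⟨a, ha⟩ := hpar (by omega) (by rw [hnext]; omega)
  exact ⟨a - 1, by omega⟩

lemma onTrack_succ {g : Fin n → Fin n} {c k t r : ℕ} {γ : ℕ → ℤ}
    (hsep : TracksSeparated g c k γ) (htrack : ∀ s, 1 ≤ s → s ≤ k → OnTrack g c γ t s)
    (hr : 1 ≤ r) (hrk : r ≤ k) : OnTrack (g ∘ round t g) c γ (t + 1) r := by
  have hmono : ∀ y, largeCount g c y ≤ largeCount (g ∘ round t g) c y :=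
    largeCount_le_largeCount_round t g c
  rw [OnTrack, show γ r + ((t + 1 : ℕ) : ℤ) = γ r + t + 1 by push_cast; ring]
  by_cases hhome : r ≤ largeCount g c ((n : ℤ) - r)
  · refine ⟨(hhome.trans (hmono _)).trans (largeCount_antitone _ _ (min_le_left _ _)),
      fun hnear hq => ?_⟩
    have := largeCount_antitone (g ∘ round t g) c (show γ r + t + 1 + 1 ≤ (n : ℤ) - r by omega)
    have := hmono ((n : ℤ) - r)
    omega
  push Not at hhome
  obtain ⟨hpos, hpar⟩ := htrack r hr hrk
  have hblock := fun q => le_of_blocked (q := q) hsep htrack hrk hhome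
  constructor
  · rcases le_or_gt ((n : ℤ) - r) (γ r + t) with hfar | hnear
    · rw [min_eq_left (by omega)]
      rw [min_eq_left hfar] at hpos
      exact hpos.trans (hmono _)
    rw [min_eq_right (by omega)]
    rw [min_eq_right hnear.le] at hpos
    by_cases hq1 : r ≤ largeCount g c (γ r + t + 1)
    · exact hq1.trans (hmono _)
    push Not at hq1
    obtain ⟨i, hi, hic⟩ := exists_of_largeCount_succ_lt (by omega : largeCount g c (γ r + t + 1) <
      largeCount g c (γ r + t))
    obtain ⟨a, ha⟩ := hpar hnear hq1
    have hin : i.val + 1 < n := by omega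
    by_cases hjc : c < (g ⟨i.val + 1, hin⟩).val
    · exact absurd (hblock _ hpos hq1 _ (by simp [hi]) hjc).1 (by omega)
    have := largeCount_le_largeCount_round_succ (t := t) i (by omega) hin hic (not_lt.1 hjc)
    rw [hi] at this
    omega
  · intro hnear hq2
    by_cases hq : largeCount g c (γ r + t + 1) < r
    · exact hpar (by omega) hq
    push Not at hq
    have hq1 : largeCount g c (γ r + t + 1 + 1) < r := (hmono _).trans_lt hq2
    obtain ⟨i, hi, hic⟩ := exists_of_largeCount_succ_lt (by omega : largeCount g c
      (γ r + t + 1 + 1) < largeCount g c (γ r + t + 1))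
    have hin : i.val + 1 < n := by omega
    by_cases hjc : c < (g ⟨i.val + 1, hin⟩).val
    · exact (hblock _ hq hq1 _ (by simp [hi]) hjc).2 rfl
    by_contra hodd
    obtain ⟨a, ha⟩ := Int.not_even_iff_odd.1 hodd
    have := largeCount_le_largeCount_round_succ (t := t) i (by omega) hin hic (not_lt.1 hjc)
    rw [hi] at this
    omega

lemma onTrack_orbit {f : Fin n → Fin n} {c k : ℕ} {γ : ℕ → ℤ} (hsep : TracksSeparated f c k γ)
    (h0 : ∀ r, 1 ≤ r → r ≤ k → OnTrack f c γ 0 r) (t : ℕ) :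
    ∀ r, 1 ≤ r → r ≤ k → OnTrack (orbit f t) c γ t r := by
  induction t with
  | zero => exact h0
  | succ t ih =>
    have hsep_t : TracksSeparated (orbit f t) c k γ := fun r hr hrk hhome =>
      hsep r hr hrk ((largeCount_orbit_mono f c _ (Nat.zero_le t)).trans_lt hhome)
    exact fun r hr hrk => onTrack_succ hsep_t ih hr hrk

lemma card_filter_le_val {m : ℕ} (hm : m ≤ n) : #{i : Fin n | m ≤ i.val} = n - m := by
  have := card_filter_add_card_filter_not (s := (univ : Finset (Fin n))) (fun i => i.val < m)
  rw [Fin.card_filter_val_lt, card_univ, Fintype.card_fin, min_eq_right hm] at this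
  simp only [not_lt] at this
  omega

lemma lt_of_le_largeCount {g : Fin n → Fin n} {c m : ℕ} (hm : m ≤ n)
    (h : n - m ≤ largeCount g c m) {i : Fin n} (hi : m ≤ i.val) : c < (g i).val := by
  by_contra hic
  have hsub : (univ.filter fun j : Fin n => (m : ℤ) ≤ j.val ∧ c < (g j).val) ⊆
      univ.filter fun j : Fin n => m ≤ j.val :=
    fun j hj => by simp only [mem_filter, mem_univ, true_and] at hj ⊢; omega
  have := card_lt_card ((ssubset_iff_of_subset hsub).2 ⟨i, by simpa using hi, by simp [hic]⟩)
  rw [card_filter_le_val hm] at this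
  exact absurd h (not_le.2 this)

section Displacement

def DisplacedAtMost (C : Fin n ≃ Fin n) (d : ℕ) : Prop :=
  ∀ i, ((i.val : ℤ) - (C i).val).natAbs ≤ d

variable {C : Fin n ≃ Fin n} {d : ℕ}

/-- The tokens `n - r, …, n - 1` are large and lie within `d` of their destinations. -/
lemma le_largeCount_of_le_sub (hC : DisplacedAtMost C d) {c r : ℕ}
    (hr : r + c + 1 ≤ n) {y : ℤ} (hy : y ≤ (n : ℤ) - r - d) : r ≤ largeCount C c y := by
  calc r = #{v : Fin n | n - r ≤ v.val} := by rw [card_filter_le_val (by omega)]; omega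
    _ ≤ largeCount C c y := by
      refine card_le_card_of_injOn C.symm (fun v hv => ?_) C.symm.injective.injOn
      have := hC (C.symm v)
      simp only [coe_filter, mem_univ, true_and, Set.mem_ofPred_eq, Equiv.apply_symm_apply]
        at hv this ⊢
      omega

lemma le_largeCount_sub (hC : DisplacedAtMost C d) {c r : ℕ}
    (hr : r + d + c + 1 ≤ n) : r ≤ largeCount C c ((n : ℤ) - r) := by
  calc r = #{v : Fin n | n - r ≤ v.val} := by rw [card_filter_le_val (by omega)]; omega
    _ ≤ largeCount C c ((n : ℤ) - r) := by
      refine card_le_card fun i hi => ?_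
      have := hC i
      simp only [mem_filter, mem_univ, true_and] at hi ⊢
      omega

/-- The `r`-th of the `k` large values from the right starts within `d` of its home `n - r`;
the last `k - d` of them are home already, and each further one may lag one round behind its
right neighbour. -/
def trackStart (n k d r : ℕ) : ℤ :=
  if r + d ≤ k then n - r else n + k - 2 * (r + d)

lemma onTrack_trackStart (hC : DisplacedAtMost C d) {c k r : ℕ}
    (hk : c + k + 1 = n) (hrk : r ≤ k) : OnTrack C c (trackStart n k d) 0 r := by
  unfold OnTrack trackStart
  split_ifs with hhome
  · refine ⟨by simpa using le_largeCount_sub hC (by omega), fun h => by omega⟩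
  · refine ⟨(le_largeCount_of_le_sub hC (by omega) (le_refl _)).trans
      (largeCount_antitone _ _ (by omega)), fun _ h => ?_⟩
    exact absurd (le_largeCount_of_le_sub hC (c := c) (r := r) (by omega) (by omega)) (not_le.2 h)

lemma tracksSeparated_trackStart (hC : DisplacedAtMost C d) {c k : ℕ}
    (hk : c + k + 1 = n) : TracksSeparated C c k (trackStart n k d) := by
  intro r hr hrk hhome
  have : k < r + d := by
    by_contra h
    exact absurd (le_largeCount_sub hC (by omega)) (not_le.2 hhome)
  unfold trackStart
  split_ifs <;> omega

lemma lt_orbit_apply (hC : DisplacedAtMost C d) {c : ℕ} {i : Fin n}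
    (hi : c < i.val) : c < (orbit C (2 * d) i).val := by
  have hk : c + (n - 1 - c) + 1 = n := by omega
  have htrack := (onTrack_orbit (tracksSeparated_trackStart hC hk)
    (fun r _ hrk => onTrack_trackStart hC hk hrk) (2 * d) (n - 1 - c) (by omega) le_rfl).1
  have hend : min ((n : ℤ) - (n - 1 - c : ℕ)) (trackStart n (n - 1 - c) d (n - 1 - c) + (2 * d : ℕ))
      = ((c + 1 : ℕ) : ℤ) := by
    unfold trackStart
    split_ifs <;> omega
  rw [hend] at htrack
  exact lt_of_le_largeCount (by omega) (by omega) (by omega : c + 1 ≤ i.val)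

lemma eq_id_of_le_apply {g : Fin n → Fin n} (hg : Function.Bijective g) (h : ∀ i, i ≤ g i) :
    g = id := by
  have hsum : ∑ i, (g i).val = ∑ i : Fin n, i.val := Fintype.sum_bijective g hg _ _ fun _ => rfl
  funext i
  have hle : ∀ i ∈ univ, i.val ≤ (g i).val := fun i _ => Fin.le_def.1 (h i)
  exact Fin.ext ((sum_eq_sum_iff_of_le hle).1 hsum.symm i (mem_univ i)).symm

lemma orbit_eq_id (hC : DisplacedAtMost C d) : orbit C (2 * d) = id := by
  refine eq_id_of_le_apply (orbit_bijective C.bijective _) fun i => Fin.le_def.2 ?_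
  rcases Nat.eq_zero_or_pos i.val with h | h
  · omega
  · have := lt_orbit_apply hC (c := i.val - 1) (i := i) (by omega)
    omega

end Displacement

end OddEvenSort

theorem stmt_6_general (n : ℕ) (C : Fin n ≃ Fin n) :
    ∃ ms : List (Fin n → Fin n), Solves (pathGraph n) (⇑C) ms ∧
      ms.length ≤ 2 * Finset.univ.sup fun v : Fin n => ((v.val : ℤ) - ((C v).val : ℤ)).natAbs := by
  set d := Finset.univ.sup fun v : Fin n => ((v.val : ℤ) - ((C v).val : ℤ)).natAbs
  have hC : OddEvenSort.DisplacedAtMost C d := fun i =>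
    Finset.le_sup (f := fun v : Fin n => ((v.val : ℤ) - ((C v).val : ℤ)).natAbs) (Finset.mem_univ i)
  refine ⟨OddEvenSort.schedule C (2 * d), ⟨?_, ?_⟩, by simp [OddEvenSort.schedule]⟩
  · simp only [OddEvenSort.schedule, List.mem_map]
    rintro _ ⟨t, -, rfl⟩
    exact OddEvenSort.isMatchingPerm_round t _
  · rw [OddEvenSort.routeSeq_schedule]
    exact OddEvenSort.orbit_eq_id hC

/-- on the path `P_n`, if `d_max = max_v |v - C(v)| ≥ 1`, then there is a
solution of length at most `2 · d_max`; in particular the stretch factor of the lower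
bound `d_max` on line graphs is at most 2. -/
theorem stmt_6 (n : ℕ) (C : Fin n ≃ Fin n)
    (hd : 1 ≤ Finset.univ.sup fun v : Fin n => ((v.val : ℤ) - ((C v).val : ℤ)).natAbs) :
    ∃ ms : List (Fin n → Fin n), Solves (pathGraph n) (⇑C) ms ∧
      ms.length ≤ 2 * Finset.univ.sup fun v : Fin n => ((v.val : ℤ) - ((C v).val : ℤ)).natAbs :=
  stmt_6_general n C
end

section
/- Let n ≥ 2 be even, let P_{2n} be the path graph with vertex set {1,…,2n} and edges (i,i+1), and let C be the configuration with C(i) = n+i for 1 ≤ i ≤ n and C(i) = i−n for n+1 ≤ i ≤ 2n (so d_max = n). Then every sequence of matchings solving the instance (P_{2n}, C) has length at least 2n−1; consequently the stretch factor of the lower bound d_max on line graphs is at least 2 − 1/n. -/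
open Function

/-- `composeList (ms.take t) v` is the initial position of the token that sits on `v` after the
first `t` matchings of `ms`, since `routeSeq C ms = C ∘ composeList ms`. -/
def composeList {V : Type*} (l : List (V → V)) : V → V :=
  l.foldr (· ∘ ·) id

section composeList

variable {V : Type*}

theorem composeList_cons (f : V → V) (l : List (V → V)) :
    composeList (f :: l) = f ∘ composeList l :=
  rfl

theorem composeList_append (l₁ l₂ : List (V → V)) :
    composeList (l₁ ++ l₂) = composeList l₁ ∘ composeList l₂ := by
  induction l₁ with
  | nil => rfl
  | cons f l ih => rw [List.cons_append, composeList_cons, composeList_cons, ih, comp_assoc]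

theorem composeList_take_add_one (l : List (V → V)) {t : ℕ} (ht : t < l.length) :
    composeList (l.take (t + 1)) = composeList (l.take t) ∘ l[t] := by
  rw [List.take_add_one, List.getElem?_eq_getElem ht, Option.toList_some, composeList_append]
  rfl

theorem injective_composeList {l : List (V → V)} (h : ∀ f ∈ l, Injective f) :
    Injective (composeList l) := by
  induction l with
  | nil => exact injective_id
  | cons f l ih =>
    exact (h f List.mem_cons_self).comp (ih fun g hg => h g (List.mem_cons_of_mem f hg))

end composeList

section pathGraph

variable {N : ℕ}

theorem pathGraph_adj {i j : Fin N} :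
    (pathGraph N).Adj i j ↔ (i : ℕ) + 1 = j ∨ (j : ℕ) + 1 = i := by
  rw [pathGraph, SimpleGraph.fromRel_adj, and_iff_right_iff_imp]
  rintro h rfl
  omega

theorem IsMatchingPerm.val_le_of_pathGraph {m : Fin N → Fin N}
    (hm : IsMatchingPerm (pathGraph N) m) (v : Fin N) :
    (m v : ℕ) ≤ v + 1 ∧ (v : ℕ) ≤ m v + 1 := by
  rcases hm.2 v with h | h
  · rw [h]
    omega
  · rcases pathGraph_adj.1 h with h | h <;> omega

theorem val_composeList_le {l : List (Fin N → Fin N)}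
    (hl : ∀ m ∈ l, IsMatchingPerm (pathGraph N) m) (v : Fin N) :
    composeList l v ≤ (v : ℕ) + l.length ∧ (v : ℕ) ≤ composeList l v + l.length := by
  induction l with
  | nil => simp [composeList]
  | cons m l ih =>
    have hrest := ih fun m' hm' => hl m' (List.mem_cons_of_mem m hm')
    have hstep := (hl m List.mem_cons_self).val_le_of_pathGraph (composeList l v)
    rw [composeList_cons, comp_apply, List.length_cons]
    omega

theorem exists_round_mem_at_zero_not_mem_at_one [NeZero N] {ms : List (Fin N → Fin N)}
    (hms : ∀ m ∈ ms, IsMatchingPerm (pathGraph N) m) {S : Set (Fin N)} (h0 : 0 ∉ S)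
    (hend : composeList ms 0 ∈ S) :
    ∃ t ≤ ms.length, composeList (ms.take t) 0 ∈ S ∧
      ∃ v : Fin N, (v : ℕ) = 1 ∧ composeList (ms.take t) v ∉ S := by
  obtain ⟨t, hout, hin⟩ := Nat.exists_not_and_succ_of_not_zero_of_exists
    (p := fun t => composeList (ms.take t) 0 ∈ S) h0 ⟨ms.length, by simpa using hend⟩
  have ht : t < ms.length := by
    by_contra! h
    rw [List.take_of_length_le h] at hout
    rw [List.take_of_length_le (by omega)] at hin
    exact hout hin
  have hm := hms ms[t] (List.getElem_mem ht)
  rw [composeList_take_add_one ms ht, comp_apply] at hin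
  have hmove : ms[t] 0 ≠ 0 := fun h => hout (h ▸ hin)
  refine ⟨t + 1, ht, ?_, ms[t] 0, ?_, ?_⟩
  · rwa [composeList_take_add_one ms ht]
  · rcases hm.2 0 with h | h
    · exact absurd h hmove
    · rcases pathGraph_adj.1 h with h | h <;> simp_all
  · rwa [composeList_take_add_one ms ht, comp_apply, hm.1 0]

end pathGraph

def swapHalves (n : ℕ) : Fin (2 * n) → Fin (2 * n) := fun x =>
  if h : x.val < n then ⟨x.val + n, by linarith⟩
  else ⟨x.val - n, (Nat.sub_le _ _).trans_lt x.isLt⟩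

theorem val_swapHalves_of_lt {n : ℕ} {x : Fin (2 * n)} (hx : (x : ℕ) < n) :
    (swapHalves n x : ℕ) = x + n := by
  simp [swapHalves, hx]

/-- on the path `P_{2n}` with `n ≥ 2` even, the configuration
`C(i) = n + i` for `1 ≤ i ≤ n` and `C(i) = i - n` for `n+1 ≤ i ≤ 2n` (0-indexed below)
requires at least `2n - 1` matchings in every solution. -/
theorem stmt_7 (n : ℕ)
    (ms : List (Fin (2 * n) → Fin (2 * n)))
    (hms : Solves (pathGraph (2 * n))
      (fun x : Fin (2 * n) =>
        if h : x.val < n then (⟨x.val + n, by omega⟩ : Fin (2 * n))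
        else ⟨x.val - n, by have := x.isLt; omega⟩) ms) :
    2 * n - 1 ≤ ms.length := by
  obtain rfl | hpos := n.eq_zero_or_pos
  · simp
  have : NeZero (2 * n) := ⟨by omega⟩
  obtain ⟨hmatch, hsolve⟩ := hms
  change swapHalves n ∘ composeList ms = id at hsolve
  have hend : n ≤ ((composeList ms 0 : Fin (2 * n)) : ℕ) := by
    by_contra! h
    have := congrArg Fin.val (congrFun hsolve 0)
    rw [comp_apply, val_swapHalves_of_lt h, id, Fin.val_zero] at this
    omega
  obtain ⟨T, -, hT0, v, hv, hTv⟩ := exists_round_mem_at_zero_not_mem_at_one hmatch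
    (S := {x | n ≤ (x : ℕ)}) (by simpa using hpos.ne') hend
  set w := composeList (ms.take T) v
  have hinj := injective_composeList fun m hm => (hmatch m hm).1.injective
  have hback : composeList ms (swapHalves n w) = w :=
    LeftInverse.rightInverse_of_surjective (f := swapHalves n) (congrFun hsolve)
      (Finite.surjective_of_injective hinj) w
  have htake : ∀ m ∈ ms.take T, IsMatchingPerm _ m :=
    fun m hm => hmatch m (List.mem_of_mem_take hm)
  have hdrop : ∀ m ∈ ms.drop T, IsMatchingPerm _ m :=
    fun m hm => hmatch m (List.mem_of_mem_drop hm)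
  have hreturn : composeList (ms.drop T) (swapHalves n w) = v :=
    injective_composeList (fun m hm => (htake m hm).1.injective) <| by
      rw [← comp_apply (f := composeList (ms.take T)), ← composeList_append,
        List.take_append_drop, hback]
  have hfirst := val_composeList_le htake 0
  have hsecond := val_composeList_le hdrop (swapHalves n w)
  rw [List.length_take, Fin.val_zero] at hfirst
  rw [List.length_drop, hreturn, val_swapHalves_of_lt (not_le.1 hTv)] at hsecond
  simp only [Set.mem_ofPred_eq] at hT0
  omega
end

section
/- Let G be the cycle graph on vertices {1,…,n} with edges (i,i+1) for 1 ≤ i ≤ n−1 together with (n,1). For every configuration C on G there exists a sequence of at most n matchings, none using the edge (n,1), that solves the instance (G,C); consequently the stretch factor of the lower bound d_max on n-cycle graphs is at most n. -/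
/-!
The matchings are the rounds of odd-even transposition sort on the path `0 – 1 – ⋯ – (n-1)`,
so the wrap-around edge is never used. To see that `n` rounds sort any array, fix a threshold
`c` and let `N_t(k)` count the positions `≥ k` holding a value `≥ c` after `t` rounds. A round
does not change `N(k)` unless one of its compared pairs straddles `k`, and then it raises it to
at least `min (N(k-1)) (N(k+1) + 1)`. From `N_0(k) ≥ K - k`, where `K = N(0)`, this propagates
the lower bound `N_t(k) ≥ min (min K (n-k)) (⌈K/2⌉ + ⌊(t-k)/2⌋)`, which for `t = n` says that
the values `≥ c` fill a suffix. Hence the array is sorted, and a sorted permutation is the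
identity.
-/

open Finset

section OddEvenTranspositionSort

variable {α : Type*} [LinearOrder α]

/-- Round `t` of odd-even transposition sort, as a permutation of positions. Arrays are indexed
by `ℕ`; positions `≥ n` are fixed and their values are never read. -/
def oddEvenSwap (n t : ℕ) (a : ℕ → α) (i : ℕ) : ℕ :=
  if i % 2 = t % 2 ∧ i + 1 < n ∧ a (i + 1) < a i then i + 1
  else if i % 2 ≠ t % 2 ∧ 0 < i ∧ i < n ∧ a i < a (i - 1) then i - 1
  else i

def oddEvenSort (n : ℕ) (a : ℕ → α) : ℕ → ℕ → α
  | 0 => a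
  | t + 1 => oddEvenSort n a t ∘ oddEvenSwap n t (oddEvenSort n a t)

namespace oddEvenSwap

variable {n t : ℕ} {a : ℕ → α} {i : ℕ}

lemma eq_or_succ_or_pred (n t : ℕ) (a : ℕ → α) (i : ℕ) :
    oddEvenSwap n t a i = i ∨
      (oddEvenSwap n t a i = i + 1 ∧ i % 2 = t % 2 ∧ i + 1 < n) ∨
      (oddEvenSwap n t a i + 1 = i ∧ i % 2 ≠ t % 2 ∧ i < n) := by
  unfold oddEvenSwap
  split_ifs <;> omega

lemma involutive (n t : ℕ) (a : ℕ → α) : Function.Involutive (oddEvenSwap n t a) := by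
  intro i
  by_cases h₁ : i % 2 = t % 2 ∧ i + 1 < n ∧ a (i + 1) < a i
  · have h : (i + 1) % 2 ≠ t % 2 ∧ 0 < i + 1 ∧ i + 1 < n ∧ a (i + 1) < a (i + 1 - 1) := by
      simpa using ⟨by omega, h₁.2⟩
    simp [oddEvenSwap, h₁, h]
  by_cases h₂ : i % 2 ≠ t % 2 ∧ 0 < i ∧ i < n ∧ a i < a (i - 1)
  · have h : (i - 1) % 2 = t % 2 ∧ i - 1 + 1 < n ∧ a (i - 1 + 1) < a (i - 1) := by
      rw [Nat.sub_add_cancel h₂.2.1]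
      exact ⟨by omega, h₂.2.2⟩
    simp only [oddEvenSwap, h₂, false_and, ↓reduceIte, ne_eq, not_false_eq_true, and_self, h]
    omega
  · simp [oddEvenSwap, h₁, h₂]

lemma lt (hi : i < n) : oddEvenSwap n t a i < n := by
  rcases eq_or_succ_or_pred n t a i with h | h | h <;> omega

lemma mem_Ico_iff {k : ℕ} (hk : k % 2 = t % 2 ∨ k = 0) :
    oddEvenSwap n t a i ∈ Ico k n ↔ i ∈ Ico k n := by
  simp only [mem_Ico]
  rcases eq_or_succ_or_pred n t a i with h | h | h <;> omega

end oddEvenSwap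

lemma apply_oddEvenSwap_of_mod_ne {n t i : ℕ} (a : ℕ → α) (hi : i % 2 ≠ t % 2) (h0 : 0 < i)
    (hn : i < n) : a (oddEvenSwap n t a i) = max (a (i - 1)) (a i) := by
  unfold oddEvenSwap
  by_cases h : a i < a (i - 1)
  · rw [if_neg (by tauto), if_pos ⟨hi, h0, hn, h⟩, max_eq_left h.le]
  · rw [if_neg (by tauto), if_neg (by tauto), max_eq_right (not_lt.mp h)]

def suffixCount (n : ℕ) (c : α) (a : ℕ → α) (k : ℕ) : ℕ := #{i ∈ Ico k n | c ≤ a i}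

namespace suffixCount

variable {n t k : ℕ} {c : α} {a : ℕ → α}

lemma le_sub : suffixCount n c a k ≤ n - k :=
  (card_filter_le _ _).trans (Nat.card_Ico k n).le

lemma antitone : Antitone (suffixCount n c a) := fun _ _ h =>
  card_le_card (filter_subset_filter _ (Ico_subset_Ico_left h))

lemma eq_ite_add (hk : k < n) :
    suffixCount n c a k = (if c ≤ a k then 1 else 0) + suffixCount n c a (k + 1) := by
  unfold suffixCount
  rw [← insert_Ico_add_one_left_eq_Ico hk, filter_insert]
  split_ifs
  · rw [card_insert_of_notMem (by simp), add_comm]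
  · rw [zero_add]

lemma zero_le_add (n : ℕ) (c : α) (a : ℕ → α) (k : ℕ) :
    suffixCount n c a 0 ≤ suffixCount n c a k + k := by
  induction k with
  | zero => rfl
  | succ k ih =>
    rcases lt_or_ge k n with hk | hk
    · rw [eq_ite_add hk] at ih
      split_ifs at ih <;> omega
    · have := le_sub (n := n) (c := c) (a := a) (k := 0)
      omega

lemma comp_oddEvenSwap (b : ℕ → α) (hk : k % 2 = t % 2 ∨ k = 0) :
    suffixCount n c (a ∘ oddEvenSwap n t b) k = suffixCount n c a k := by
  have hinv := oddEvenSwap.involutive n t b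
  refine card_nbij' (oddEvenSwap n t b) (oddEvenSwap n t b) ?_ ?_ (fun i _ => hinv i)
    (fun i _ => hinv i)
  · intro i hi
    simp only [mem_coe, mem_filter, Function.comp_apply] at hi ⊢
    exact ⟨(oddEvenSwap.mem_Ico_iff hk).2 hi.1, hi.2⟩
  · intro i hi
    simp only [mem_coe, mem_filter, Function.comp_apply] at hi ⊢
    exact ⟨(oddEvenSwap.mem_Ico_iff hk).2 hi.1, by rw [hinv]; exact hi.2⟩

lemma min_le_comp_oddEvenSwap (hk0 : 0 < k) (hkn : k < n) (hk : k % 2 ≠ t % 2) :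
    min (suffixCount n c a (k - 1)) (suffixCount n c a (k + 1) + 1) ≤
      suffixCount n c (a ∘ oddEvenSwap n t a) k := by
  have hmax : c ≤ a (oddEvenSwap n t a k) ↔ c ≤ a (k - 1) ∨ c ≤ a k := by
    rw [apply_oddEvenSwap_of_mod_ne a hk hk0 hkn, le_max_iff]
  have hprev := eq_ite_add (c := c) (a := a) (show k - 1 < n by omega)
  rw [Nat.sub_add_cancel hk0, eq_ite_add (c := c) hkn] at hprev
  rw [eq_ite_add hkn, comp_oddEvenSwap a (.inl (by omega)), hprev, Function.comp_apply]
  split_ifs <;> simp_all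

end suffixCount

lemma suffixCount_oddEvenSort_zero (n : ℕ) (c : α) (a : ℕ → α) (t : ℕ) :
    suffixCount n c (oddEvenSort n a t) 0 = suffixCount n c a 0 := by
  induction t with
  | zero => rfl
  | succ t ih => rw [oddEvenSort, suffixCount.comp_oddEvenSwap _ (.inr rfl), ih]

theorem le_suffixCount_oddEvenSort (n : ℕ) (c : α) (a : ℕ → α) (t : ℕ) {k : ℕ} (hk : k ≤ n) :
    min (min (suffixCount n c a 0 : ℤ) (n - k))
        ((suffixCount n c a 0 + 1) / 2 + ((t : ℤ) - k) / 2) ≤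
      suffixCount n c (oddEvenSort n a t) k := by
  set K := suffixCount n c a 0
  induction t generalizing k with
  | zero =>
    have := suffixCount.zero_le_add n c a k
    simp only [oddEvenSort]
    omega
  | succ t ih =>
    have hK : suffixCount n c (oddEvenSort n a t) 0 = K := suffixCount_oddEvenSort_zero n c a t
    rw [oddEvenSort]
    rcases Nat.eq_zero_or_pos k with rfl | hk0
    · rw [suffixCount.comp_oddEvenSwap _ (.inr rfl), hK]
      omega
    rcases hk.eq_or_lt with rfl | hkn
    · omega
    by_cases hpar : k % 2 = t % 2
    · rw [suffixCount.comp_oddEvenSwap _ (.inl hpar)]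
      have := ih hk
      omega
    · have hstep := suffixCount.min_le_comp_oddEvenSwap (c := c) (a := oddEvenSort n a t)
        hk0 hkn hpar
      have hleft := ih (k := k - 1) (by omega)
      have hright := ih (k := k + 1) (by omega)
      omega

lemma monotoneOn_of_min_le_suffixCount {n : ℕ} {a : ℕ → α}
    (h : ∀ c k, k ≤ n → min (suffixCount n c a 0) (n - k) ≤ suffixCount n c a k) :
    MonotoneOn a (Set.Iio n) := by
  intro i _ j (hj : j < n) hij
  by_contra! hlt
  have hij : i < j := lt_of_le_of_ne hij (by rintro rfl; exact lt_irrefl _ hlt)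
  have hNj := suffixCount.eq_ite_add (c := a i) (a := a) hj
  have hNi := suffixCount.eq_ite_add (c := a i) (a := a) (hij.trans hj)
  rw [if_neg (not_le.mpr hlt)] at hNj
  rw [if_pos le_rfl] at hNi
  have hfill := h (a i) j hj.le
  have hroom := suffixCount.le_sub (n := n) (c := a i) (a := a) (k := j + 1)
  have hanti₁ := suffixCount.antitone (n := n) (c := a i) (a := a) (Nat.zero_le i)
  have hanti₂ := suffixCount.antitone (n := n) (c := a i) (a := a) (show i + 1 ≤ j from hij)
  omega

theorem oddEvenSort_monotoneOn (n : ℕ) (a : ℕ → α) :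
    MonotoneOn (oddEvenSort n a n) (Set.Iio n) := by
  refine monotoneOn_of_min_le_suffixCount fun c k hk => ?_
  have := le_suffixCount_oddEvenSort n c a n hk
  rw [suffixCount_oddEvenSort_zero]
  omega

def oddEvenMatching (n t : ℕ) (a : ℕ → α) (v : Fin n) : Fin n :=
  ⟨oddEvenSwap n t a v, oddEvenSwap.lt v.isLt⟩

lemma oddEvenMatching_isMatchingPerm (n t : ℕ) (a : ℕ → α) :
    IsMatchingPerm (cycleGraph n) (oddEvenMatching n t a) := by
  refine ⟨fun v => Fin.ext (oddEvenSwap.involutive n t a v), fun v => ?_⟩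
  rcases oddEvenSwap.eq_or_succ_or_pred n t a v with h | ⟨h, -, hlt⟩ | ⟨h, -, hlt⟩
  · exact .inl (Fin.ext h)
  all_goals
    right
    simp only [cycleGraph, SimpleGraph.fromRel_adj, ne_eq, Fin.ext_iff, oddEvenMatching]
  · exact ⟨by omega, .inl (by rw [h, Nat.mod_eq_of_lt hlt])⟩
  · exact ⟨by omega, .inr (by rw [h, Nat.mod_eq_of_lt hlt])⟩

end OddEvenTranspositionSort

section Routing

variable {V : Type*}

lemma routeSeq_append_singleton (C m : V → V) (ms : List (V → V)) :
    routeSeq C (ms ++ [m]) = routeSeq C ms ∘ m := by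
  induction ms generalizing C with
  | nil => rfl
  | cons m' ms ih => exact ih (C ∘ m')

lemma routeSeq_injective {C : V → V} {ms : List (V → V)} (hC : Function.Injective C)
    (hms : ∀ m ∈ ms, Function.Injective m) : Function.Injective (routeSeq C ms) := by
  induction ms generalizing C with
  | nil => exact hC
  | cons m ms ih =>
    exact ih (hC.comp (hms m List.mem_cons_self)) fun m' h => hms m' (List.mem_cons_of_mem _ h)

end Routing

lemma routeSeq_oddEvenMatching {n : ℕ} (C : Fin n → Fin n) (a : ℕ → ℕ)
    (ha : ∀ v, (C v : ℕ) = a v) (t : ℕ) (v : Fin n) :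
    (routeSeq C ((List.range t).map fun s => oddEvenMatching n s (oddEvenSort n a s)) v).val =
      oddEvenSort n a t v := by
  induction t generalizing v with
  | zero => exact ha v
  | succ t ih =>
    rw [List.range_succ, List.map_append, List.map_singleton, routeSeq_append_singleton,
      Function.comp_apply, ih]
    rfl

/-- on the `n`-cycle, every configuration admits a solution using at most `n`
matchings none of which uses the wrap-around edge `(n, 1)` (0-indexed: `(n-1, 0)`);
consequently the stretch factor of `d_max` on `n`-cycles is at most `n`. -/
theorem stmt_8 (n : ℕ) (hn : 3 ≤ n) (C : Fin n ≃ Fin n) :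
    ∃ ms : List (Fin n → Fin n),
      Solves (cycleGraph n) (⇑C) ms ∧ ms.length ≤ n ∧
      ∀ m ∈ ms, m (⟨n - 1, by omega⟩ : Fin n) ≠ (⟨0, by omega⟩ : Fin n) := by
  set a : ℕ → ℕ := fun i => if h : i < n then C ⟨i, h⟩ else 0
  set ms := (List.range n).map fun t => oddEvenMatching n t (oddEvenSort n a t)
  have hmatch : ∀ m ∈ ms, IsMatchingPerm (cycleGraph n) m := by
    simp only [ms, List.mem_map]
    rintro _ ⟨t, -, rfl⟩
    exact oddEvenMatching_isMatchingPerm n t _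
  have hroute := routeSeq_oddEvenMatching C a (fun v => by simp [a]) n
  have hmono : Monotone (routeSeq C ms) := fun v w hvw => by
    rw [Fin.le_def, hroute, hroute]
    exact oddEvenSort_monotoneOn n a v.isLt w.isLt hvw
  have hinj := routeSeq_injective C.injective fun m hm => (hmatch m hm).1.injective
  refine ⟨ms, ⟨hmatch, (hmono.strictMono_of_injective hinj).eq_id⟩, by simp [ms], ?_⟩
  simp only [ms, List.mem_map]
  rintro _ ⟨t, -, rfl⟩ hwrap
  have hval : oddEvenSwap n t (oddEvenSort n a t) (n - 1) = 0 := congrArg Fin.val hwrap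
  rcases oddEvenSwap.eq_or_succ_or_pred n t (oddEvenSort n a t) (n - 1) with h | h | h <;> omega
end

section
/- Let G be the star graph K_{1,n} with center vertex v_0 and leaves u_1,…,u_n (n ≥ 2), with edges (v_0, u_i) for each i. Let C be any configuration with C(v_0) = v_0 and C(u_i) ≠ u_i for every leaf u_i. Then every sequence of matchings solving the instance (G,C) has length at least n. Since d_max = 2 for such a configuration, the stretch factor of the lower bound d_max on subdivided star graphs is Ω(h), where h is the maximum degree. -/
/-- The star graph `K_{1,n}`: vertex `0` is the center and the `n` other vertices are
leaves, each adjacent only to the center. -/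
def starGraph (n : ℕ) : SimpleGraph (Fin (n + 1)) :=
  SimpleGraph.fromRel fun u _ => u = 0

/-!
Every leaf token starts on a wrong leaf, so every leaf vertex has to be moved by at least
one matching of the solution. On a star, every edge contains the center, so a matching moves
at most one leaf. Hence the matchings that move leaves are pairwise distinct, one per leaf,
and there are at least `n` of them.
-/

theorem List.foldr_comp_id_apply_of_forall_apply_eq {α : Type*} (l : List (α → α)) {v : α}
    (h : ∀ g ∈ l, g v = v) : l.foldr (· ∘ ·) id v = v := by
  induction l with
  | nil => rfl
  | cons g l ih =>
    rw [List.foldr_cons, Function.comp_apply, ih fun g' hg' => h g' (List.mem_cons_of_mem _ hg')]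
    exact h g List.mem_cons_self

theorem exists_mem_apply_ne_of_routeSeq_eq_id {V : Type*} {C : V → V} {ms : List (V → V)}
    (hC : routeSeq C ms = id) {v : V} (hv : C v ≠ v) : ∃ m ∈ ms, m v ≠ v := by
  by_contra! hfix
  have hroute := congrFun hC v
  rw [routeSeq, Function.comp_apply, List.foldr_comp_id_apply_of_forall_apply_eq ms hfix] at hroute
  exact hv hroute

namespace IsMatchingPerm

variable {n : ℕ} {m : Fin (n + 1) → Fin (n + 1)}

theorem starGraph_apply_eq_zero (hm : IsMatchingPerm (starGraph n) m) {v : Fin (n + 1)}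
    (hv : v ≠ 0) (hmv : m v ≠ v) : m v = 0 := by
  rcases hm.2 v with h | h
  · exact absurd h hmv
  · rw [starGraph, SimpleGraph.fromRel_adj] at h
    exact h.2.resolve_left hv

theorem starGraph_eq_of_apply_ne (hm : IsMatchingPerm (starGraph n) m) {v w : Fin (n + 1)}
    (hv : v ≠ 0) (hw : w ≠ 0) (hmv : m v ≠ v) (hmw : m w ≠ w) : v = w := by
  rw [← hm.1 v, ← hm.1 w, hm.starGraph_apply_eq_zero hv hmv, hm.starGraph_apply_eq_zero hw hmw]

end IsMatchingPerm

theorem stmt_9_general (n : ℕ) (C : Fin (n + 1) ≃ Fin (n + 1))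
    (hleaf : ∀ v : Fin (n + 1), v ≠ 0 → C v ≠ v)
    (ms : List (Fin (n + 1) → Fin (n + 1))) (hms : Solves (starGraph n) (⇑C) ms) :
    n ≤ ms.length := by
  classical
  obtain ⟨hmatch, hsolve⟩ := hms
  have hleaves_moved : ∀ v ∈ Finset.univ.erase (0 : Fin (n + 1)), ∃ m ∈ ms.toFinset, m v ≠ v :=
    fun v hv => by
      simpa using exists_mem_apply_ne_of_routeSeq_eq_id hsolve (hleaf v (Finset.ne_of_mem_erase hv))
  have hone_leaf : ∀ m ∈ ms.toFinset,
      ({v ∈ Finset.univ.erase 0 | m v ≠ v} : Set (Fin (n + 1))).Subsingleton :=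
    fun m hm v hv w hw =>
      (hmatch m (List.mem_toFinset.mp hm)).starGraph_eq_of_apply_ne
        (Finset.ne_of_mem_erase hv.1) (Finset.ne_of_mem_erase hw.1) hv.2 hw.2
  calc n = (Finset.univ.erase (0 : Fin (n + 1))).card := by simp
    _ ≤ ms.toFinset.card := Finset.card_le_card_of_forall_subsingleton _ hleaves_moved hone_leaf
    _ ≤ ms.length := List.toFinset_card_le ms

/-- on the star `K_{1,n}` with `n ≥ 2`, if `C` fixes the center token and
places every leaf token on a wrong leaf, then every solution has length at least `n`
(while `d_max = 2`, so the stretch factor of `d_max` on subdivided stars is `Ω(h)`). -/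
theorem stmt_9 (n : ℕ) (hn : 2 ≤ n) (C : Fin (n + 1) ≃ Fin (n + 1))
    (h0 : C 0 = 0) (hleaf : ∀ v : Fin (n + 1), v ≠ 0 → C v ≠ v)
    (ms : List (Fin (n + 1) → Fin (n + 1))) (hms : Solves (starGraph n) (⇑C) ms) :
    n ≤ ms.length :=
  stmt_9_general n C hleaf ms hms
end

section
/- Let C be any configuration on the path graph P_n with d_max ≥ 1. Then for every token t, the potential Φ_C(t) ≤ 2·d_max − 1. -/
/-- `φ⁻(t, Q)` for the prefix `Q = [1, j]`: the number of vertices `i' ≤ j` whose token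
must cross `t`, i.e. with `C(i') > t`. -/
def phiM (n : ℕ) (C : Fin n → Fin n) (t j : Fin n) : ℕ :=
  (Finset.univ.filter fun i' : Fin n => i' ≤ j ∧ t < C i').card

/-- `ψ⁻(t, Q)` for the prefix `Q = [1, j]` and position `i` of `t`: the number of vertices
`i'` with `j < i' < i` whose token need not cross `t`, i.e. with `C(i') < t`. -/
def psiM (n : ℕ) (C : Fin n → Fin n) (t i j : Fin n) : ℕ :=
  (Finset.univ.filter fun i' : Fin n => j < i' ∧ i' < i ∧ C i' < t).card

/-- The prefixes for token `t` at position `i`: endpoints `j < i` such that some vertex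
`i' ≤ j` carries a token with `C(i') > t`. -/
def prefixSet (n : ℕ) (C : Fin n → Fin n) (t i : Fin n) : Finset (Fin n) :=
  Finset.univ.filter fun j : Fin n => j < i ∧ ∃ i' ≤ j, t < C i'

/-- `Φ⁻_C(t)` (with `i` the position of `t`): the maximum of `φ⁻ + ψ⁻` over all prefixes,
or `0` if no prefix exists. -/
def PhiM (n : ℕ) (C : Fin n → Fin n) (t i : Fin n) : ℕ :=
  (prefixSet n C t i).sup fun j => phiM n C t j + psiM n C t i j

/-- `φ⁺(t, Q)` for the suffix `Q = [j, n]`. -/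
def phiP (n : ℕ) (C : Fin n → Fin n) (t j : Fin n) : ℕ :=
  (Finset.univ.filter fun i' : Fin n => j ≤ i' ∧ C i' < t).card

/-- `ψ⁺(t, Q)` for the suffix `Q = [j, n]` and position `i` of `t`. -/
def psiP (n : ℕ) (C : Fin n → Fin n) (t i j : Fin n) : ℕ :=
  (Finset.univ.filter fun i' : Fin n => i < i' ∧ i' < j ∧ t < C i').card

/-- The suffixes for token `t` at position `i`: startpoints `j > i` such that some vertex
`i' ≥ j` carries a token with `C(i') < t`. -/
def suffixSet (n : ℕ) (C : Fin n → Fin n) (t i : Fin n) : Finset (Fin n) :=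
  Finset.univ.filter fun j : Fin n => i < j ∧ ∃ i', j ≤ i' ∧ C i' < t

/-- `Φ⁺_C(t)` (with `i` the position of `t`): the maximum of `φ⁺ + ψ⁺` over all suffixes,
or `0` if no suffix exists. -/
def PhiP (n : ℕ) (C : Fin n → Fin n) (t i : Fin n) : ℕ :=
  (suffixSet n C t i).sup fun j => phiP n C t j + psiP n C t i j

/-- The potential `Φ_C(t) = Φ⁻_C(t) + Φ⁺_C(t)` of token `t` at position `i = C⁻¹(t)`. -/
def Phi (n : ℕ) (C : Fin n → Fin n) (t i : Fin n) : ℕ :=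
  PhiM n C t i + PhiP n C t i

/-! ### Auxiliary lemmas for `stmt_10` -/

section AuxStmt10

lemma pathGraph_eq_mathlib (n : ℕ) : pathGraph n = SimpleGraph.pathGraph n := by
  ext u v
  rw [SimpleGraph.pathGraph_adj, pathGraph, SimpleGraph.fromRel_adj]
  constructor
  · rintro ⟨h, h1 | h1⟩ <;> omega
  · rintro (h | h)
    · exact ⟨by intro he; subst he; omega, Or.inl h⟩
    · exact ⟨by intro he; subst he; omega, Or.inr h⟩

lemma pathGraph_walk_length_ge {n : ℕ} {u v : Fin n} (w : (pathGraph n).Walk u v) :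
    ((u : ℤ) - v).natAbs ≤ w.length := by
  induction w with
  | nil => simp
  | @cons a b c h p ih =>
    rw [pathGraph_eq_mathlib, SimpleGraph.pathGraph_adj] at h
    rw [SimpleGraph.Walk.length_cons]
    omega

lemma pathGraph_dist_ge {n : ℕ} (u v : Fin n) :
    ((u : ℤ) - v).natAbs ≤ (pathGraph n).dist u v := by
  have hr : (pathGraph n).Reachable u v := by
    rw [pathGraph_eq_mathlib]
    cases n with
    | zero => exact u.elim0
    | succ m => exact (SimpleGraph.pathGraph_connected m).preconnected u v
  obtain ⟨w, hw⟩ := hr.exists_walk_length_eq_dist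
  rw [← hw]
  exact pathGraph_walk_length_ge w

lemma exists_max_ge {t : ℕ} {S : Finset ℕ} (hS : S.Nonempty) (h : ∀ v ∈ S, t ≤ v) :
    ∃ m ∈ S, t + S.card ≤ m + 1 := by
  refine ⟨S.max' hS, S.max'_mem hS, ?_⟩
  have hsub : S ⊆ Finset.Icc t (S.max' hS) :=
    fun v hv => Finset.mem_Icc.2 ⟨h v hv, S.le_max' v hv⟩
  have hc := Finset.card_le_card hsub
  rw [Nat.card_Icc] at hc
  have ht := h _ (S.max'_mem hS)
  omega

lemma exists_min_le {t : ℕ} {S : Finset ℕ} (hS : S.Nonempty) (h : ∀ v ∈ S, v ≤ t) :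
    ∃ m ∈ S, m + S.card ≤ t + 1 := by
  refine ⟨S.min' hS, S.min'_mem hS, ?_⟩
  have hsub : S ⊆ Finset.Icc (S.min' hS) t :=
    fun v hv => Finset.mem_Icc.2 ⟨S.min'_le v hv, h v hv⟩
  have hc := Finset.card_le_card hsub
  rw [Nat.card_Icc] at hc
  have ht := h _ (S.min'_mem hS)
  omega

lemma card_image_val_comp {n : ℕ} (C : Fin n ≃ Fin n) (A : Finset (Fin n)) :
    (A.image fun p => ((C p : Fin n) : ℕ)).card = A.card :=
  Finset.card_image_of_injective _ (fun a b hab => C.injective (Fin.val_injective hab))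

/-- From the prefix `[1,j]`: the largest token above `t` inside the
prefix must travel at least `t + φ⁻ - j`. -/
lemma prefix_bound1 {n : ℕ} (C : Fin n ≃ Fin n) (d : ℕ)
    (tok : ∀ p : Fin n, ((((C p : Fin n) : ℕ) : ℤ) - (p : ℕ) ≤ (d : ℤ)) ∧
      (((p : ℕ) : ℤ) - ((C p : Fin n) : ℕ) ≤ (d : ℤ)))
    {t i j : Fin n} (hj : j ∈ prefixSet n (⇑C) t i) :
    ((t : ℕ) : ℤ) + phiM n (⇑C) t j ≤ (d : ℤ) + ((j : ℕ) : ℤ) := by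
  obtain ⟨-, -, i0, hi0j, hi0⟩ := Finset.mem_filter.1 hj
  set A := Finset.univ.filter fun i' : Fin n => i' ≤ j ∧ t < C i' with hA
  have hphi : phiM n (⇑C) t j = A.card := rfl
  have hAne : A.Nonempty := ⟨i0, Finset.mem_filter.2 ⟨Finset.mem_univ _, hi0j, hi0⟩⟩
  have hScard : (A.image fun p => ((C p : Fin n) : ℕ)).card = A.card :=
    card_image_val_comp C A
  have hvals : ∀ v ∈ A.image fun p => ((C p : Fin n) : ℕ), (t : ℕ) + 1 ≤ v := by
    intro v hv
    obtain ⟨p, hp, rfl⟩ := Finset.mem_image.1 hv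
    exact (Finset.mem_filter.1 hp).2.2
  obtain ⟨m, hm, hmge⟩ := exists_max_ge (hAne.image _) hvals
  obtain ⟨p, hp, rfl⟩ := Finset.mem_image.1 hm
  have hple : (p : ℕ) ≤ (j : ℕ) := (Finset.mem_filter.1 hp).2.1
  have htok := (tok p).1
  omega

/-- From the suffix `[j,n]`: the smallest token below `t` inside the
suffix must travel at least `j - (t - φ⁺)`. -/
lemma suffix_bound1 {n : ℕ} (C : Fin n ≃ Fin n) (d : ℕ)
    (tok : ∀ p : Fin n, ((((C p : Fin n) : ℕ) : ℤ) - (p : ℕ) ≤ (d : ℤ)) ∧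
      (((p : ℕ) : ℤ) - ((C p : Fin n) : ℕ) ≤ (d : ℤ)))
    {t i j : Fin n} (hj : j ∈ suffixSet n (⇑C) t i) :
    ((j : ℕ) : ℤ) + phiP n (⇑C) t j ≤ (d : ℤ) + ((t : ℕ) : ℤ) := by
  obtain ⟨-, -, i0, hi0j, hi0⟩ := Finset.mem_filter.1 hj
  set A := Finset.univ.filter fun i' : Fin n => j ≤ i' ∧ C i' < t with hA
  have hphi : phiP n (⇑C) t j = A.card := rfl
  have hAne : A.Nonempty := ⟨i0, Finset.mem_filter.2 ⟨Finset.mem_univ _, hi0j, hi0⟩⟩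
  have hScard : (A.image fun p => ((C p : Fin n) : ℕ)).card = A.card :=
    card_image_val_comp C A
  have hvals : ∀ v ∈ A.image fun p => ((C p : Fin n) : ℕ), v ≤ (t : ℕ) - 1 := by
    intro v hv
    obtain ⟨p, hp, rfl⟩ := Finset.mem_image.1 hv
    have hlt : ((C p : Fin n) : ℕ) < (t : ℕ) := (Finset.mem_filter.1 hp).2.2
    omega
  obtain ⟨m, hm, hmle⟩ := exists_min_le (hAne.image _) hvals
  obtain ⟨p, hp, rfl⟩ := Finset.mem_image.1 hm
  have hpge : (j : ℕ) ≤ (p : ℕ) := (Finset.mem_filter.1 hp).2.1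
  have ht1 : ((C p : Fin n) : ℕ) < (t : ℕ) := (Finset.mem_filter.1 hp).2.2
  have htok := (tok p).2
  omega

/-- Single-prefix case: the smallest token among those `≤ t` lying strictly
right of `j` and at most at `i` must travel at least `j + 1 - (t - ψ⁻)`. -/
lemma prefix_bound2 {n : ℕ} (C : Fin n ≃ Fin n) (d : ℕ)
    (tok : ∀ p : Fin n, ((((C p : Fin n) : ℕ) : ℤ) - (p : ℕ) ≤ (d : ℤ)) ∧
      (((p : ℕ) : ℤ) - ((C p : Fin n) : ℕ) ≤ (d : ℤ)))
    {t i j : Fin n} (hCi : C i = t) (hj : j ∈ prefixSet n (⇑C) t i) :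
    ((j : ℕ) : ℤ) + 1 + psiM n (⇑C) t i j ≤ (d : ℤ) + ((t : ℕ) : ℤ) := by
  obtain ⟨-, hji, -⟩ := Finset.mem_filter.1 hj
  set B := Finset.univ.filter fun i' : Fin n => j < i' ∧ i' < i ∧ C i' < t with hB
  have hpsi : psiM n (⇑C) t i j = B.card := rfl
  have hiB : i ∉ B := by
    intro h
    exact absurd (Finset.mem_filter.1 h).2.2.1 (lt_irrefl i)
  have hTcard : (insert i B).card = B.card + 1 := Finset.card_insert_of_notMem hiB
  have hScard : ((insert i B).image fun p => ((C p : Fin n) : ℕ)).card = (insert i B).card :=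
    card_image_val_comp C _
  have hvals : ∀ v ∈ (insert i B).image fun p => ((C p : Fin n) : ℕ), v ≤ (t : ℕ) := by
    intro v hv
    obtain ⟨p, hp, rfl⟩ := Finset.mem_image.1 hv
    rcases Finset.mem_insert.1 hp with rfl | hp
    · rw [hCi]
    · exact le_of_lt (Finset.mem_filter.1 hp).2.2.2
  have hTne : (insert i B).Nonempty := ⟨i, Finset.mem_insert_self _ _⟩
  obtain ⟨m, hm, hmle⟩ := exists_min_le (hTne.image _) hvals
  obtain ⟨p, hp, rfl⟩ := Finset.mem_image.1 hm
  have hpgt : (j : ℕ) < (p : ℕ) := by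
    rcases Finset.mem_insert.1 hp with rfl | hp
    · exact hji
    · exact (Finset.mem_filter.1 hp).2.1
  have htok := (tok p).2
  omega

/-- Single-suffix case: the largest token among those `≥ t` lying strictly left
of `j` and at least at `i` must travel at least `t + ψ⁺ - (j - 1)`. -/
lemma suffix_bound2 {n : ℕ} (C : Fin n ≃ Fin n) (d : ℕ)
    (tok : ∀ p : Fin n, ((((C p : Fin n) : ℕ) : ℤ) - (p : ℕ) ≤ (d : ℤ)) ∧
      (((p : ℕ) : ℤ) - ((C p : Fin n) : ℕ) ≤ (d : ℤ)))
    {t i j : Fin n} (hCi : C i = t) (hj : j ∈ suffixSet n (⇑C) t i) :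
    ((t : ℕ) : ℤ) + 1 + psiP n (⇑C) t i j ≤ (d : ℤ) + ((j : ℕ) : ℤ) := by
  obtain ⟨-, hij, -⟩ := Finset.mem_filter.1 hj
  set B := Finset.univ.filter fun i' : Fin n => i < i' ∧ i' < j ∧ t < C i' with hB
  have hpsi : psiP n (⇑C) t i j = B.card := rfl
  have hiB : i ∉ B := by
    intro h
    exact absurd (Finset.mem_filter.1 h).2.1 (lt_irrefl i)
  have hTcard : (insert i B).card = B.card + 1 := Finset.card_insert_of_notMem hiB
  have hScard : ((insert i B).image fun p => ((C p : Fin n) : ℕ)).card = (insert i B).card :=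
    card_image_val_comp C _
  have hvals : ∀ v ∈ (insert i B).image fun p => ((C p : Fin n) : ℕ), (t : ℕ) ≤ v := by
    intro v hv
    obtain ⟨p, hp, rfl⟩ := Finset.mem_image.1 hv
    rcases Finset.mem_insert.1 hp with rfl | hp
    · rw [hCi]
    · exact le_of_lt (Finset.mem_filter.1 hp).2.2.2
  have hTne : (insert i B).Nonempty := ⟨i, Finset.mem_insert_self _ _⟩
  obtain ⟨m, hm, hmge⟩ := exists_max_ge (hTne.image _) hvals
  obtain ⟨p, hp, rfl⟩ := Finset.mem_image.1 hm
  have hplt : (p : ℕ) < (j : ℕ) := by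
    rcases Finset.mem_insert.1 hp with rfl | hp
    · exact hij
    · exact (Finset.mem_filter.1 hp).2.2.1
  have htok := (tok p).1
  omega

/-- The middle tokens `ψ⁻`, `ψ⁺` together with `t` itself all live strictly
between `j` and `j'`. -/
lemma middle_count {n : ℕ} (C : Fin n ≃ Fin n) {t i j j' : Fin n}
    (hj : j ∈ prefixSet n (⇑C) t i) (hj' : j' ∈ suffixSet n (⇑C) t i) :
    psiM n (⇑C) t i j + psiP n (⇑C) t i j' + 1 ≤ (j' : ℕ) - (j : ℕ) - 1 := by
  obtain ⟨-, hji, -⟩ := Finset.mem_filter.1 hj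
  obtain ⟨-, hij', -⟩ := Finset.mem_filter.1 hj'
  set B := Finset.univ.filter fun i' : Fin n => j < i' ∧ i' < i ∧ C i' < t with hB
  set B' := Finset.univ.filter fun i' : Fin n => i < i' ∧ i' < j' ∧ t < C i' with hB'
  have hpsiM : psiM n (⇑C) t i j = B.card := rfl
  have hpsiP : psiP n (⇑C) t i j' = B'.card := rfl
  have hiB' : i ∉ B' := fun h => absurd (Finset.mem_filter.1 h).2.1 (lt_irrefl i)
  have hdisj : Disjoint B (insert i B') := by
    rw [Finset.disjoint_right]
    intro x hx hxB
    have hxi : x < i := (Finset.mem_filter.1 hxB).2.2.1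
    rcases Finset.mem_insert.1 hx with rfl | hx
    · exact absurd hxi (lt_irrefl _)
    · exact absurd (lt_trans hxi (Finset.mem_filter.1 hx).2.1) (lt_irrefl x)
  have hsub : B ∪ insert i B' ⊆ Finset.Ioo j j' := by
    intro x hx
    rcases Finset.mem_union.1 hx with hx | hx
    · obtain ⟨-, h1, h2, -⟩ := Finset.mem_filter.1 hx
      exact Finset.mem_Ioo.2 ⟨h1, lt_trans h2 hij'⟩
    · rcases Finset.mem_insert.1 hx with rfl | hx
      · exact Finset.mem_Ioo.2 ⟨hji, hij'⟩
      · obtain ⟨-, h1, h2, -⟩ := Finset.mem_filter.1 hx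
        exact Finset.mem_Ioo.2 ⟨lt_trans hji h1, h2⟩
  have hcard := Finset.card_le_card hsub
  rw [Finset.card_union_of_disjoint hdisj, Finset.card_insert_of_notMem hiB',
    Fin.card_Ioo] at hcard
  omega

end AuxStmt10

/-- for any configuration `C` on the path `P_n` with `d_max ≥ 1`, the
potential of every token `t` satisfies `Φ_C(t) ≤ 2 · d_max - 1`. -/
theorem stmt_10 (n : ℕ) (C : Fin n ≃ Fin n)
    (hd : 1 ≤ Finset.univ.sup fun t : Fin n => (pathGraph n).dist (C.symm t) t) :
    ∀ t : Fin n, Phi n (⇑C) t (C.symm t) ≤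
      2 * (Finset.univ.sup fun t : Fin n => (pathGraph n).dist (C.symm t) t) - 1 := by
  intro t
  set d := Finset.univ.sup fun t : Fin n => (pathGraph n).dist (C.symm t) t with hdd
  set i := C.symm t with hi
  have hCi : C i = t := C.apply_symm_apply t
  have tok : ∀ p : Fin n, ((((C p : Fin n) : ℕ) : ℤ) - (p : ℕ) ≤ (d : ℤ)) ∧
      (((p : ℕ) : ℤ) - ((C p : Fin n) : ℕ) ≤ (d : ℤ)) := by
    intro p
    have h1 : (pathGraph n).dist (C.symm (C p)) (C p) ≤ d :=
      hdd ▸ Finset.le_sup (f := fun t : Fin n => (pathGraph n).dist (C.symm t) t) (Finset.mem_univ (C p))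
    rw [Equiv.symm_apply_apply] at h1
    have h2 := pathGraph_dist_ge p (C p)
    constructor <;> omega
  rw [Phi]
  by_cases hpre : (prefixSet n (⇑C) t i).Nonempty
  · obtain ⟨j, hj, hJ⟩ := Finset.exists_mem_eq_sup _ hpre
      (fun j => phiM n (⇑C) t j + psiM n (⇑C) t i j)
    by_cases hsuf : (suffixSet n (⇑C) t i).Nonempty
    · obtain ⟨j', hj', hJ'⟩ := Finset.exists_mem_eq_sup _ hsuf
        (fun j => phiP n (⇑C) t j + psiP n (⇑C) t i j)
      rw [PhiM, hJ, PhiP, hJ']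
      have h1 := prefix_bound1 C d tok hj
      have h2 := suffix_bound1 C d tok hj'
      have h3 := middle_count C hj hj'
      omega
    · rw [PhiP, Finset.not_nonempty_iff_eq_empty.1 hsuf, Finset.sup_empty, Nat.bot_eq_zero, PhiM, hJ]
      have h1 := prefix_bound1 C d tok hj
      have h2 := prefix_bound2 C d tok hCi hj
      omega
  · rw [PhiM, Finset.not_nonempty_iff_eq_empty.1 hpre, Finset.sup_empty, Nat.bot_eq_zero]
    by_cases hsuf : (suffixSet n (⇑C) t i).Nonempty
    · obtain ⟨j', hj', hJ'⟩ := Finset.exists_mem_eq_sup _ hsuf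
        (fun j => phiP n (⇑C) t j + psiP n (⇑C) t i j)
      rw [PhiP, hJ']
      have h1 := suffix_bound1 C d tok hj'
      have h2 := suffix_bound2 C d tok hCi hj'
      omega
    · rw [PhiP, Finset.not_nonempty_iff_eq_empty.1 hsuf, Finset.sup_empty, Nat.bot_eq_zero]
      omega
end

section
/- Let n = 2r ≥ 4 be even and let G be the cycle graph on vertices {1,…,n} with edges (i,i+1) for 1 ≤ i ≤ n−1 together with (n,1). Partition the edges as E_1 = {(i,i+1) : i odd} and E_2 = E ∖ E_1. If a sequence of matchings (M_1,…,M_k) with M_i ∩ M_{i+1} = ∅ for all 1 ≤ i < k solves the instance (G,C), then there exists an (E_1,E_2)-alternating sequence of matchings (M'_1,…,M'_{k+1}) — meaning M'_j ⊆ E_1 for odd j and M'_j ⊆ E_2 for even j — that also solves (G,C). -/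
/-- `m` is a matching contained in `E₁ = {(i, i+1) : i odd}` (1-indexed; 0-indexed the
left endpoints are even). -/
def SubE1 (n : ℕ) (m : Fin n → Fin n) : Prop :=
  Function.Involutive m ∧ ∀ v : Fin n, m v = v ∨
    (v.val % 2 = 0 ∧ (m v).val = v.val + 1) ∨ ((m v).val % 2 = 0 ∧ v.val = (m v).val + 1)

/-- `m` is a matching contained in `E₂ = E ∖ E₁`, i.e. the edges `(i, i+1)` with `i` even
(1-indexed; 0-indexed the left endpoints are odd) together with the wrap edge `(n, 1)`
(0-indexed `(n-1, 0)`). -/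
def SubE2 (n : ℕ) (m : Fin n → Fin n) : Prop :=
  Function.Involutive m ∧ ∀ v : Fin n, m v = v ∨
    (v.val % 2 = 1 ∧ (m v).val = v.val + 1) ∨ ((m v).val % 2 = 1 ∧ v.val = (m v).val + 1) ∨
    (v.val = n - 1 ∧ (m v).val = 0) ∨ (v.val = 0 ∧ (m v).val = n - 1)

/-!
Let `e` and `f` be the involutions pairing the endpoints of the edges of `E₁` and of `E₂`. Every
matching `m` of the cycle is the product, in either order, of its `E₁`-part `mₑ` and its `E₂`-part
`m_f`. Splitting each `mᵢ` and regrouping,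
`m₁ ∘ ⋯ ∘ m_k = (m₁)ₑ ∘ ((m₁)_f ∘ (m₂)_f) ∘ ((m₂)ₑ ∘ (m₃)ₑ) ∘ ⋯`,
a product of `k + 1` factors lying alternately in `E₁` and `E₂`. Each factor is a matching: a vertex
lies on only one edge of each `Eᵢ`, so parts of the same type of two edge-disjoint matchings have
disjoint supports.
-/

open Function

section Alternating

variable {V : Type*}

def IsSubmatching (e m : V → V) : Prop :=
  Involutive m ∧ ∀ v, m v = v ∨ m v = e v

def EdgeDisjoint (a c : V → V) : Prop :=
  ∀ v, a v = v ∨ c v ≠ a v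

structure IsEdgePartition (G : SimpleGraph V) (e f : V → V) : Prop where
  involutive_left : Involutive e
  involutive_right : Involutive f
  adj_iff : ∀ v w, G.Adj v w ↔ v ≠ w ∧ (w = e v ∨ w = f v)
  -- `e` and `f` share no edge
  eq_self_of_left_eq_right : ∀ v, e v = f v → e v = v

open Classical in
noncomputable def partAlong (e m : V → V) (v : V) : V :=
  if m v = e v then m v else v

/-- With `mₑ = partAlong e m`, `alternating e f a [m₁, …, m_k]` is
`[a ∘ (m₁)ₑ, (m₁)_f ∘ (m₂)_f, (m₂)ₑ ∘ (m₃)ₑ, …]`, ending with the remaining part of `m_k`. -/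
noncomputable def alternating (e f a : V → V) : List (V → V) → List (V → V)
  | [] => [a]
  | m :: l => (a ∘ partAlong e m) :: alternating f e (partAlong f m) l

variable {G : SimpleGraph V} {e f a c m : V → V}

theorem partAlong_of_eq {v : V} (h : m v = e v) : partAlong e m v = m v := if_pos h

theorem partAlong_of_ne {v : V} (h : m v ≠ e v) : partAlong e m v = v := if_neg h

theorem IsEdgePartition.symm (hG : IsEdgePartition G e f) : IsEdgePartition G f e where
  involutive_left := hG.involutive_right
  involutive_right := hG.involutive_left
  adj_iff v w := by rw [hG.adj_iff, or_comm]
  eq_self_of_left_eq_right v h := h ▸ hG.eq_self_of_left_eq_right v h.symm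

theorem IsEdgePartition.eq_or_eq_or_eq (hG : IsEdgePartition G e f) (hm : IsMatchingPerm G m)
    (v : V) : m v = v ∨ m v = e v ∨ m v = f v := by
  rcases hm.2 v with h | h
  · exact Or.inl h
  · exact Or.inr ((hG.adj_iff v (m v)).1 h).2

theorem IsEdgePartition.isMatchingPerm (hG : IsEdgePartition G e f) (hm : IsSubmatching e m) :
    IsMatchingPerm G m := by
  refine ⟨hm.1, fun v => ?_⟩
  by_cases hv : m v = v
  · exact Or.inl hv
  · exact Or.inr ((hG.adj_iff v (m v)).2 ⟨Ne.symm hv, Or.inl ((hm.2 v).resolve_left hv)⟩)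

theorem isSubmatching_id : IsSubmatching e id :=
  ⟨fun _ => rfl, fun _ => Or.inl rfl⟩

theorem isSubmatching_partAlong (he : Involutive e) (hm : Involutive m) :
    IsSubmatching e (partAlong e m) := by
  refine ⟨fun v => ?_, fun v => ?_⟩
  · by_cases h : m v = e v
    · have h' : m (m v) = e (m v) := by rw [hm v, h, he v]
      rw [partAlong_of_eq h, partAlong_of_eq h', hm v]
    · rw [partAlong_of_ne h, partAlong_of_ne h]
  · by_cases h : m v = e v
    · exact Or.inr ((partAlong_of_eq h).trans h)
    · exact Or.inl (partAlong_of_ne h)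

theorem IsEdgePartition.partAlong_comp_partAlong (hG : IsEdgePartition G e f)
    (hm : IsMatchingPerm G m) : partAlong e m ∘ partAlong f m = m := by
  funext v
  by_cases hf : m v = f v
  · rw [comp_apply, partAlong_of_eq hf]
    by_cases he : m (m v) = e (m v)
    · rw [partAlong_of_eq he, hm.1 v]
      have hev : e v = f v := calc
        e v = e (e (m v)) := by rw [← he, hm.1 v]
        _ = f v := by rw [hG.involutive_left, hf]
      rw [hf, ← hev, hG.eq_self_of_left_eq_right v hev]
    · rw [partAlong_of_ne he]
  · rw [comp_apply, partAlong_of_ne hf]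
    rcases hG.eq_or_eq_or_eq hm v with h | h | h
    · by_cases he : m v = e v
      · rw [partAlong_of_eq he]
      · rw [partAlong_of_ne he, h]
    · rw [partAlong_of_eq h]
    · exact absurd h hf

theorem EdgeDisjoint.partAlong_left (h : EdgeDisjoint a c) : EdgeDisjoint (partAlong e a) c := by
  intro v
  by_cases ha : a v = e v
  · rw [partAlong_of_eq ha]; exact h v
  · exact Or.inl (partAlong_of_ne ha)

theorem EdgeDisjoint.partAlong_right (h : EdgeDisjoint a c) : EdgeDisjoint a (partAlong e c) := by
  intro v
  by_cases ha : a v = v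
  · exact Or.inl ha
  · refine Or.inr ?_
    by_cases hc : c v = e v
    · rw [partAlong_of_eq hc]; exact (h v).resolve_left ha
    · rw [partAlong_of_ne hc]; exact Ne.symm ha

theorem EdgeDisjoint.eq_self_or_eq_self (ha : IsSubmatching e a) (hc : IsSubmatching e c)
    (h : EdgeDisjoint a c) (v : V) : a v = v ∨ c v = v := by
  rcases ha.2 v with ha' | ha'
  · exact Or.inl ha'
  rcases hc.2 v with hc' | hc'
  · exact Or.inr hc'
  exact (h v).imp_right fun hne => absurd (hc'.trans ha'.symm) hne

theorem IsSubmatching.comp (ha : IsSubmatching e a) (hc : IsSubmatching e c)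
    (h : EdgeDisjoint a c) : IsSubmatching e (a ∘ c) := by
  have hd := h.eq_self_or_eq_self ha hc
  have hca : ∀ v, a v ≠ v → c (a v) = a v := fun v hv =>
    (hd (a v)).resolve_left fun h' => hv (by rw [← h', ha.1 v])
  have hac : ∀ v, c v ≠ v → a (c v) = c v := fun v hv =>
    (hd (c v)).resolve_right fun h' => hv (by rw [← h', hc.1 v])
  refine ⟨fun v => ?_, fun v => ?_⟩
  · by_cases hcv : c v = v
    · by_cases hav : a v = v
      · simp only [comp_apply, hcv, hav]
      · simp only [comp_apply, hcv, hca v hav, ha.1 v]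
    · simp only [comp_apply, hac v hcv, hc.1 v, (hd v).resolve_right hcv]
  · by_cases hcv : c v = v
    · simpa only [comp_apply, hcv] using ha.2 v
    · simpa only [comp_apply, hac v hcv] using hc.2 v

theorem length_alternating (e f a : V → V) (l : List (V → V)) :
    (alternating e f a l).length = l.length + 1 := by
  induction l generalizing e f a with
  | nil => rfl
  | cons m l ih => simp [alternating, ih]

theorem IsEdgePartition.foldr_comp_alternating (hG : IsEdgePartition G e f) (a : V → V)
    {l : List (V → V)} (hl : ∀ m ∈ l, IsMatchingPerm G m) :
    (alternating e f a l).foldr (· ∘ ·) id = a ∘ l.foldr (· ∘ ·) id := by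
  induction l generalizing e f a with
  | nil => rfl
  | cons m l ih =>
    have hm := hl m List.mem_cons_self
    simp only [alternating, List.foldr_cons,
      ih hG.symm _ fun m' hm' => hl m' (List.mem_cons_of_mem m hm')]
    rw [comp_assoc, ← comp_assoc (partAlong e m), hG.partAlong_comp_partAlong hm]

theorem IsEdgePartition.isSubmatching_getElem_alternating (hG : IsEdgePartition G e f)
    {l : List (V → V)} (ha : IsSubmatching e a) (hl : ∀ m ∈ l, IsMatchingPerm G m)
    (hchain : (a :: l).IsChain EdgeDisjoint) (j : ℕ) (hj : j < (alternating e f a l).length) :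
    IsSubmatching (if j % 2 = 0 then e else f) (alternating e f a l)[j] := by
  induction l generalizing e f a j with
  | nil =>
    obtain rfl : j = 0 := by simpa [alternating] using hj
    exact ha
  | cons m l ih =>
    have hm := hl m List.mem_cons_self
    obtain ⟨ham, hchain⟩ := List.isChain_cons_cons.mp hchain
    cases j with
    | zero =>
      exact ha.comp (isSubmatching_partAlong hG.involutive_left hm.1) ham.partAlong_right
    | succ j =>
      have := ih hG.symm (isSubmatching_partAlong hG.involutive_right hm.1)
        (fun m' hm' => hl m' (List.mem_cons_of_mem m hm')) ?_ j (by simpa [alternating] using hj)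
      · simp only [alternating, List.getElem_cons_succ]
        rcases Nat.mod_two_eq_zero_or_one j with hj2 | hj2
        · simpa [hj2, Nat.succ_mod_two_eq_one_iff.mpr hj2] using this
        · simpa [hj2, Nat.succ_mod_two_eq_zero_iff.mpr hj2] using this
      · exact hchain.imp_head fun h => h.partAlong_left

theorem isChain_id_cons {l : List (V → V)} (h : l.IsChain EdgeDisjoint) :
    (id :: l).IsChain EdgeDisjoint :=
  List.isChain_cons.2 ⟨fun _ _ _ => Or.inl rfl, h⟩

theorem IsEdgePartition.solves_alternating (hG : IsEdgePartition G e f) {C : V → V}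
    {ms : List (V → V)} (hms : Solves G C ms) (hdisj : ms.IsChain EdgeDisjoint) :
    Solves G C (alternating e f id ms) := by
  refine ⟨fun m hm => ?_, ?_⟩
  · obtain ⟨j, hj, rfl⟩ := List.mem_iff_getElem.mp hm
    have h := hG.isSubmatching_getElem_alternating isSubmatching_id hms.1
      (isChain_id_cons hdisj) j hj
    split_ifs at h
    exacts [hG.isMatchingPerm h, hG.symm.isMatchingPerm h]
  · rw [routeSeq, hG.foldr_comp_alternating id hms.1]
    exact hms.2

end Alternating

theorem Nat.add_one_mod_eq_ite_of_lt {n a : ℕ} (ha : a < n) :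
    (a + 1) % n = if a + 1 = n then 0 else a + 1 := by
  split_ifs with h
  · simp [h]
  · exact Nat.mod_eq_of_lt (by omega)

section Cycle

variable {n : ℕ} [NeZero n]

def cycleE1 (n : ℕ) [NeZero n] (v : Fin n) : Fin n :=
  if v.val % 2 = 0 then v + 1 else v - 1

def cycleE2 (n : ℕ) [NeZero n] (v : Fin n) : Fin n :=
  if v.val % 2 = 0 then v - 1 else v + 1

theorem Fin.val_add_one_eq_ite (hn : 2 ≤ n) (v : Fin n) :
    (v + 1).val = if v.val + 1 = n then 0 else v.val + 1 := by
  rw [Fin.val_add, Fin.val_one', Nat.one_mod_eq_one.mpr (by omega),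
    Nat.add_one_mod_eq_ite_of_lt v.isLt]

theorem Fin.val_sub_one_eq_ite (hn : 2 ≤ n) (v : Fin n) :
    (v - 1).val = if v.val = 0 then n - 1 else v.val - 1 := by
  rw [Fin.val_sub, Fin.val_one', Nat.one_mod_eq_one.mpr (by omega)]
  split_ifs with hv
  · rw [hv]; exact Nat.mod_eq_of_lt (by omega)
  · rw [show n - 1 + v.val = v.val - 1 + n by omega, Nat.add_mod_right]
    exact Nat.mod_eq_of_lt (by omega)

theorem val_cycleE1 (hn : 2 ≤ n) (heven : Even n) (v : Fin n) :
    (cycleE1 n v).val = if v.val % 2 = 0 then v.val + 1 else v.val - 1 := by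
  have := v.isLt
  have := Nat.even_iff.mp heven
  unfold cycleE1
  split_ifs <;> simp only [Fin.val_add_one_eq_ite hn, Fin.val_sub_one_eq_ite hn] <;>
    split_ifs <;> omega

theorem val_cycleE2 (hn : 2 ≤ n) (v : Fin n) :
    (cycleE2 n v).val = if v.val % 2 = 0 then (if v.val = 0 then n - 1 else v.val - 1)
      else (if v.val + 1 = n then 0 else v.val + 1) := by
  unfold cycleE2
  split_ifs <;> simp only [Fin.val_add_one_eq_ite hn, Fin.val_sub_one_eq_ite hn] <;>
    split_ifs <;> omega

theorem isEdgePartition_cycleGraph (hn : 4 ≤ n) (heven : Even n) :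
    IsEdgePartition (cycleGraph n) (cycleE1 n) (cycleE2 n) := by
  have he := Nat.even_iff.mp heven
  have hn2 : 2 ≤ n := by omega
  refine ⟨fun v => ?_, fun v => ?_, fun v w => ?_, fun v => ?_⟩
  · have := v.isLt
    simp only [Fin.ext_iff, val_cycleE1 hn2 heven]
    split_ifs <;> omega
  · have := v.isLt
    simp only [Fin.ext_iff, val_cycleE2 hn2]
    split_ifs <;> first | contradiction | omega
  · have := v.isLt
    have := w.isLt
    simp only [cycleGraph, SimpleGraph.fromRel_adj, ne_eq, Fin.ext_iff, val_cycleE1 hn2 heven,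
      val_cycleE2 hn2, Nat.add_one_mod_eq_ite_of_lt v.isLt, Nat.add_one_mod_eq_ite_of_lt w.isLt]
    split_ifs <;> constructor <;> intro <;> omega
  · have := v.isLt
    simp only [Fin.ext_iff, val_cycleE1 hn2 heven, val_cycleE2 hn2]
    split_ifs <;> omega

theorem subE1_iff (hn : 2 ≤ n) (heven : Even n) (m : Fin n → Fin n) :
    SubE1 n m ↔ IsSubmatching (cycleE1 n) m := by
  refine and_congr_right fun _ => forall_congr' fun v => or_congr_right ?_
  rw [Fin.ext_iff, val_cycleE1 hn heven]
  split_ifs <;> constructor <;> intro <;> omega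

theorem subE2_iff (hn : 2 ≤ n) (heven : Even n) (m : Fin n → Fin n) :
    SubE2 n m ↔ IsSubmatching (cycleE2 n) m := by
  refine and_congr_right fun _ => forall_congr' fun v => or_congr_right ?_
  rw [Fin.ext_iff, val_cycleE2 hn]
  have := Nat.even_iff.mp heven
  have := (m v).isLt
  split_ifs <;> constructor <;> intro <;> omega

end Cycle

/-- on the even cycle of length `n = 2r ≥ 4`, any solution `(M₁, …, M_k)` in
which consecutive matchings share no edge can be converted into an `(E₁, E₂)`-alternating
solution `(M'₁, …, M'_{k+1})` of length `k + 1`, where the matchings in odd positions are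
subsets of `E₁` and those in even positions are subsets of `E₂`. -/
theorem stmt_13 (n : ℕ) (hn : 4 ≤ n) (heven : Even n) (C : Fin n ≃ Fin n)
    (ms : List (Fin n → Fin n)) (hms : Solves (cycleGraph n) (⇑C) ms)
    (hdisj : ∀ (i : ℕ) (h : i + 1 < ms.length) (v : Fin n),
      (ms[i]'(by omega)) v = v ∨ (ms[i + 1]'h) v ≠ (ms[i]'(by omega)) v) :
    ∃ ms' : List (Fin n → Fin n),
      ms'.length = ms.length + 1 ∧
      Solves (cycleGraph n) (⇑C) ms' ∧
      ∀ j : Fin ms'.length,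
        (j.val % 2 = 0 → SubE1 n (ms'.get j)) ∧ (j.val % 2 = 1 → SubE2 n (ms'.get j)) := by
  have : NeZero n := ⟨by omega⟩
  have hG := isEdgePartition_cycleGraph hn heven
  have hchain : ms.IsChain EdgeDisjoint := List.isChain_iff_getElem.mpr hdisj
  set ms' := alternating (cycleE1 n) (cycleE2 n) id ms
  have hsub (j : Fin ms'.length) := hG.isSubmatching_getElem_alternating isSubmatching_id hms.1
    (isChain_id_cons hchain) j j.isLt
  refine ⟨ms', length_alternating _ _ _ _, hG.solves_alternating hms hchain,
    fun j => ⟨fun hj => ?_, fun hj => ?_⟩⟩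
  · rw [subE1_iff (by omega) heven]
    simpa only [List.get_eq_getElem, hj, if_true] using hsub j
  · rw [subE2_iff (by omega) heven]
    simpa only [List.get_eq_getElem, hj, if_neg one_ne_zero] using hsub j
end

section
/- Let G be the 2×n grid graph with vertex set {(a,b) : a ∈ {1,2}, 1 ≤ b ≤ n}. Let A = {((1,b),(2,b)) : 1 ≤ b ≤ n} be the rung edges, let B = {((2,b),(2,b+1)) : b odd} ∪ {((1,b),(1,b+1)) : b even}, and let F_2 = E ∖ (A ∪ B) (so A ∪ B is a Hamiltonian path of G). Then for every matching M ⊆ F_2 and every configuration C on G, there exist matchings M_1 ⊆ A, M_2 ⊆ B, and M_3 ⊆ A such that M_3 M_2 M_1 C = M C. -/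
/-- The `2 × n` grid graph on vertices `Fin 2 × Fin n` (row, column; 0-indexed), with
edges between vertices at Euclidean distance 1. -/
def grid2 (n : ℕ) : SimpleGraph (Fin 2 × Fin n) :=
  SimpleGraph.fromRel fun u v =>
    (u.1 = v.1 ∧ u.2.val + 1 = v.2.val) ∨ (u.2 = v.2 ∧ u.1.val + 1 = v.1.val)

/-- `{u, v}` is a rung edge, i.e. lies in `A = {((1,b),(2,b)) : 1 ≤ b ≤ n}`. -/
def inA (n : ℕ) (u v : Fin 2 × Fin n) : Prop :=
  u.2 = v.2 ∧ u.1 ≠ v.1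

/-- The column `b` (0-indexed) at which row `a` (0-indexed) contributes a horizontal edge
`(b, b+1)` to `B`: 1-indexed, `B = {((2,b),(2,b+1)) : b odd} ∪ {((1,b),(1,b+1)) : b even}`. -/
def colB (a : Fin 2) (b : ℕ) : Prop :=
  (a.val = 1 ∧ b % 2 = 0) ∨ (a.val = 0 ∧ b % 2 = 1)

/-- `{u, v}` lies in `B`. -/
def inB (n : ℕ) (u v : Fin 2 × Fin n) : Prop :=
  u.1 = v.1 ∧ ((u.2.val + 1 = v.2.val ∧ colB u.1 u.2.val) ∨
               (v.2.val + 1 = u.2.val ∧ colB u.1 v.2.val))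

/-- `{u, v}` lies in `F₂ = E ∖ (A ∪ B)`, the remaining horizontal edges. -/
def inF2 (n : ℕ) (u v : Fin 2 × Fin n) : Prop :=
  u.1 = v.1 ∧ ((u.2.val + 1 = v.2.val ∧ ¬ colB u.1 u.2.val) ∨
               (v.2.val + 1 = u.2.val ∧ ¬ colB u.1 v.2.val))

/-- `m` is a matching contained in `A`. -/
def SubA (n : ℕ) (m : Fin 2 × Fin n → Fin 2 × Fin n) : Prop :=
  Function.Involutive m ∧ ∀ v, m v = v ∨ inA n v (m v)

/-- `m` is a matching contained in `B`. -/
def SubB (n : ℕ) (m : Fin 2 × Fin n → Fin 2 × Fin n) : Prop :=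
  Function.Involutive m ∧ ∀ v, m v = v ∨ inB n v (m v)

/-- `m` is a matching contained in `F₂`. -/
def SubF2 (n : ℕ) (m : Fin 2 × Fin n → Fin 2 × Fin n) : Prop :=
  Function.Involutive m ∧ ∀ v, m v = v ∨ inF2 n v (m v)

/-!
Every edge of `F₂` lies in a row, and swapping the two rows of the grid maps `F₂` onto `B`
(the rows use opposite column parities). So if `S` flips, by rung edges, every column that `M`
touches, then `S M S` is a matching in `B` and `M = S (S M S) S`.
-/

namespace Grid2

variable {n : ℕ}

lemma colB_rev (a : Fin 2) (c : ℕ) : colB a.rev c ↔ ¬ colB a c := by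
  fin_cases a <;> simp [colB]

def swapRow (v : Fin 2 × Fin n) : Fin 2 × Fin n := (v.1.rev, v.2)

@[simp]
lemma swapRow_swapRow (v : Fin 2 × Fin n) : swapRow (swapRow v) = v := by
  simp [swapRow]

lemma inA_swapRow (v : Fin 2 × Fin n) : inA n v (swapRow v) :=
  ⟨rfl, (by decide : ∀ a : Fin 2, a ≠ a.rev) v.1⟩

lemma inB_swapRow_of_inF2 {u v : Fin 2 × Fin n} (h : inF2 n u v) :
    inB n (swapRow u) (swapRow v) := by
  obtain ⟨hrow, hcol⟩ := h
  simpa [inB, swapRow, colB_rev, hrow] using hcol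

def flipCols (p : Fin n → Prop) [DecidablePred p] (v : Fin 2 × Fin n) : Fin 2 × Fin n :=
  if p v.2 then swapRow v else v

variable (p : Fin n → Prop) [DecidablePred p]

lemma flipCols_of_pos {v : Fin 2 × Fin n} (h : p v.2) : flipCols p v = swapRow v := if_pos h

lemma flipCols_involutive : Function.Involutive (flipCols p) := by
  intro v
  by_cases h : p v.2 <;> simp [flipCols, swapRow, h]

lemma subA_flipCols : SubA n (flipCols p) := by
  refine ⟨flipCols_involutive p, fun v => ?_⟩
  by_cases h : p v.2
  · exact .inr (flipCols_of_pos p h ▸ inA_swapRow v)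
  · exact .inl (if_neg h)

lemma subB_flipCols_conj {m : Fin 2 × Fin n → Fin 2 × Fin n} (hm : SubF2 n m)
    (hp : ∀ v, m v ≠ v → p v.2) : SubB n (flipCols p ∘ m ∘ flipCols p) := by
  obtain ⟨hinv, hedge⟩ := hm
  have hs := flipCols_involutive p
  refine ⟨fun v => by simp [hs v, hinv _, hs _], fun v => ?_⟩
  by_cases hfix : m (flipCols p v) = flipCols p v
  · exact .inl (by simp [hfix, hs v])
  have hv : flipCols p v = swapRow v := by
    by_cases h : p v.2
    · exact flipCols_of_pos p h
    · exact (h (by simpa [flipCols, h] using hp _ hfix)).elim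
  have hmv : flipCols p (m (flipCols p v)) = swapRow (m (flipCols p v)) :=
    flipCols_of_pos p (hp _ (by rw [hinv]; exact Ne.symm hfix))
  right
  rw [Function.comp_apply, Function.comp_apply, hmv]
  simpa [hv] using inB_swapRow_of_inF2 ((hedge _).resolve_left hfix)

end Grid2

open Grid2 in
/-- on the `2 × n` grid, any matching `M ⊆ F₂` can be simulated by three
matchings `M₁ ⊆ A`, `M₂ ⊆ B`, `M₃ ⊆ A`: for every configuration `C`,
`M₃ M₂ M₁ C = M C`. -/
theorem stmt_15 (n : ℕ) (m : Fin 2 × Fin n → Fin 2 × Fin n) (hm : SubF2 n m)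
    (C : Fin 2 × Fin n ≃ Fin 2 × Fin n) :
    ∃ m₁ m₂ m₃ : Fin 2 × Fin n → Fin 2 × Fin n,
      SubA n m₁ ∧ SubB n m₂ ∧ SubA n m₃ ∧
      ⇑C ∘ m₁ ∘ m₂ ∘ m₃ = ⇑C ∘ m := by
  classical
  let touched : Fin n → Prop := fun b => ∃ a, m (a, b) ≠ (a, b)
  have hs := flipCols_involutive touched
  refine ⟨flipCols touched, flipCols touched ∘ m ∘ flipCols touched, flipCols touched,
    subA_flipCols touched, subB_flipCols_conj touched hm fun v h => ⟨v.1, h⟩,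
    subA_flipCols touched, ?_⟩
  funext v
  simp [hs _]
end
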